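/- arXiv:2401.07998 — 9 statements merged into one kernel-verified Lean document; each statement's English description precedes it below -/
import Mathlib

section
/- Let R ⊆ ℕ be sparse, enumerated by the increasing sequence (r_n). Let A and B be operators on R with A not identically zero on R. Then for all sufficiently large Δ ∈ ℕ, |A(n+Δ)| > B(n) for all n ∈ ℕ (where A(m) denotes Σ_i a_i r(m+i) and similarly for B). -/
open Filter

/-- `opApp a k r n = Σ_{i=0}^{k} a_i · r(n+i)`, the action of the operator with
integer coefficients `a_0, …, a_k` on the enumeration `r`. -/
def opApp (a : ℕ → ℤ) (k : ℕ) (r : ℕ → ℕ) (n : ℕ) : ℤ :=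
  ∑ i ∈ Finset.range (k + 1), a i * (r (n + i) : ℤ)

/-- `R` (enumerated by `r`) is sparse: every operator satisfies the trichotomy (S1)
and eventually positive operators satisfy (S2). -/
def IsSparse (r : ℕ → ℕ) : Prop :=
  ∀ (a : ℕ → ℤ) (k : ℕ),
    ((∀ n, opApp a k r n = 0) ∨ (∀ᶠ n in atTop, 0 < opApp a k r n) ∨
      (∀ᶠ n in atTop, opApp a k r n < 0)) ∧
    ((∀ᶠ n in atTop, 0 < opApp a k r n) → ∃ Δ : ℕ, ∀ n, (r n : ℤ) < opApp a k r (n + Δ))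

lemma opApp_shift (a : ℕ → ℤ) (k : ℕ) (r : ℕ → ℕ) (s n : ℕ) :
    opApp (fun i => if s ≤ i then a (i - s) else 0) (k + s) r n = opApp a k r (n + s) := by
  unfold opApp
  rw [show k + s + 1 = s + (k+1) by ring, Finset.sum_range_add]
  have h1 : (∑ x ∈ Finset.range s, (if s ≤ x then a (x - s) else 0) * (r (n + x) : ℤ)) = 0 := by
    apply Finset.sum_eq_zero
    intro x hx
    rw [Finset.mem_range] at hx
    rw [if_neg (by omega), zero_mul]
  rw [h1, zero_add]
  apply Finset.sum_congr rfl
  intro i hi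
  simp only []
  rw [if_pos (by omega)]
  rw [Nat.add_sub_cancel_left, Nat.add_assoc]

lemma opApp_neg (a : ℕ → ℤ) (k : ℕ) (r : ℕ → ℕ) (n : ℕ) :
    opApp (fun i => -a i) k r n = -opApp a k r n := by
  simp [opApp, neg_mul, Finset.sum_neg_distrib]

/-- Key lemma: an eventually positive operator eventually dominates every integer
multiple of `r`, uniformly in `n`. -/
lemma opApp_beats_mul (r : ℕ → ℕ) (hmono : StrictMono r) (hsparse : IsSparse r)
    (a : ℕ → ℤ) (k : ℕ) (hpos : ∀ᶠ n in atTop, 0 < opApp a k r n) :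
    ∀ M : ℕ, ∃ s : ℕ, ∀ m : ℕ, (M : ℤ) * (r m : ℤ) < opApp a k r (m + s) := by
  intro M
  induction M with
  | zero =>
      obtain ⟨Δ, hΔ⟩ := (hsparse a k).2 hpos
      exact ⟨Δ, fun m => by have := hΔ m; have : (0:ℤ) ≤ (r m : ℤ) := Int.ofNat_nonneg _; omega⟩
  | succ M ih =>
      obtain ⟨s, hs⟩ := ih
      set c : ℕ → ℤ := fun i => (if s ≤ i then a (i - s) else 0) - (if i = 0 then (M:ℤ) else 0)
        with hc
      have hcval : ∀ n, opApp c (k + s) r n = opApp a k r (n + s) - (M:ℤ) * (r n : ℤ) := by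
        intro n
        have h2 : (∑ i ∈ Finset.range (k + s + 1), (if i = 0 then (M:ℤ) else 0) * (r (n+i) : ℤ))
            = (M:ℤ) * (r n : ℤ) := by
          rw [Finset.sum_eq_single 0]
          · simp
          · intro i _ hi; rw [if_neg hi, zero_mul]
          · intro h; exact absurd (Finset.mem_range.mpr (by omega)) h
        have hsplit : opApp c (k+s) r n =
            opApp (fun i => if s ≤ i then a (i-s) else 0) (k+s) r n
            - (∑ i ∈ Finset.range (k + s + 1), (if i = 0 then (M:ℤ) else 0) * (r (n+i) : ℤ)) := by
          unfold opApp
          rw [← Finset.sum_sub_distrib]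
          apply Finset.sum_congr rfl
          intro i _
          simp only [hc]; ring
        rw [hsplit, opApp_shift, h2]
      have hcpos : ∀ᶠ n in atTop, 0 < opApp c (k + s) r n := by
        filter_upwards with n
        rw [hcval n]
        have := hs n
        omega
      obtain ⟨Δ, hΔ⟩ := (hsparse c (k + s)).2 hcpos
      refine ⟨Δ + s, fun m => ?_⟩
      have h3 := hΔ m
      rw [hcval (m + Δ)] at h3
      have h4 : (r m : ℤ) ≤ (r (m + Δ) : ℤ) := by
        exact_mod_cast hmono.monotone (Nat.le_add_right m Δ)
      have h5 : (M : ℤ) * (r m : ℤ) ≤ (M:ℤ) * (r (m + Δ) : ℤ) :=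
        mul_le_mul_of_nonneg_left h4 (Int.ofNat_nonneg M)
      have h6 : m + Δ + s = m + (Δ + s) := by omega
      rw [h6] at h3
      have h7 : ((M:ℤ)+1) * (r m : ℤ) = (M:ℤ) * (r m : ℤ) + (r m : ℤ) := by ring
      push_cast
      omega

/-- if `R` is sparse and `A` is an operator not identically zero on `R`,
then for any operator `B` and all sufficiently large `Δ`, `|A(n+Δ)| > B(n)` for all `n`. -/
theorem shift_beats (r : ℕ → ℕ) (hmono : StrictMono r) (hsparse : IsSparse r)
    (a : ℕ → ℤ) (k : ℕ) (hA : ¬ ∀ n, opApp a k r n = 0) (b : ℕ → ℤ) (l : ℕ) :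
    ∀ᶠ Δ : ℕ in atTop, ∀ n : ℕ, opApp b l r n < |opApp a k r (n + Δ)| := by
  -- get an eventually positive version a' of a
  have htri := (hsparse a k).1
  obtain ⟨a', ha'abs, ha'pos⟩ :
      ∃ a' : ℕ → ℤ, (∀ m, opApp a' k r m ≤ |opApp a k r m|) ∧
        (∀ᶠ n in atTop, 0 < opApp a' k r n) := by
    rcases htri with h | h | h
    · exact absurd h hA
    · exact ⟨a, fun m => le_abs_self _, h⟩
    · refine ⟨fun i => -a i, fun m => ?_, ?_⟩
      · rw [opApp_neg]; exact neg_le_abs _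
      · filter_upwards [h] with n hn
        rw [opApp_neg]; omega
  -- bound B by M · r(n + l)
  set M : ℕ := ∑ i ∈ Finset.range (l + 1), (b i).natAbs with hM
  have hB : ∀ n, opApp b l r n ≤ (M : ℤ) * (r (n + l) : ℤ) := by
    intro n
    have hMcast : (M : ℤ) = ∑ i ∈ Finset.range (l + 1), |b i| := by
      rw [hM, Nat.cast_sum]
      exact Finset.sum_congr rfl fun i _ => (Int.abs_eq_natAbs _).symm
    rw [hMcast, Finset.sum_mul]
    apply Finset.sum_le_sum
    intro i hi
    rw [Finset.mem_range] at hi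
    have h1 : b i * (r (n + i) : ℤ) ≤ |b i| * (r (n + i) : ℤ) :=
      mul_le_mul_of_nonneg_right (le_abs_self _) (Int.ofNat_nonneg _)
    have h2 : (r (n + i) : ℤ) ≤ (r (n + l) : ℤ) := by
      exact_mod_cast hmono.monotone (by omega)
    exact h1.trans (mul_le_mul_of_nonneg_left h2 (abs_nonneg _))
  obtain ⟨s, hs⟩ := opApp_beats_mul r hmono hsparse a' k ha'pos M
  filter_upwards [eventually_ge_atTop (l + s)] with Δ hΔ n
  have h2 : (r (n + l) : ℤ) ≤ (r (n + Δ - s) : ℤ) := by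
    exact_mod_cast hmono.monotone (by omega)
  have h3 := hs (n + Δ - s)
  have h4 : n + Δ - s + s = n + Δ := by omega
  rw [h4] at h3
  have h5 : (M : ℤ) * (r (n + l) : ℤ) ≤ (M : ℤ) * (r (n + Δ - s) : ℤ) :=
    mul_le_mul_of_nonneg_left h2 (Int.ofNat_nonneg M)
  have := ha'abs (n + Δ)
  have := hB n
  omega
end

section
/- Let R ⊆ ℕ be sparse, enumerated by (r_n), and let A be an operator with A > 0 cofinitely on R. Then there exists a rational r > 1 such that A(n+1) > r · A(n) for all sufficiently large n. In particular, the sequence n ↦ A(n) is eventually strictly increasing. -/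
open Filter

/-!
Write `A n = opApp a k r n`. Sparsity applied to `n ↦ r (n + 1) - c * r n` leaves two cases.
If `r (n + 1) / r n → ∞`, then `A n` is dominated by its top term `a k * r (n + k)`, whose
coefficient must be positive, and `A (n + 1) > 2 * A n` eventually. Otherwise
`r (n + 1) ≤ c * r n` eventually, so `A (n + Δ) ≤ L * r n` for a constant `L`. The increment
`A (n + 1) - A n` is itself an operator; it is eventually positive, since by (S2) a positive
operator is unbounded, and then (S2) gives `A (n + Δ + 1) - A (n + Δ) > r n`, whence
`A (m + 1) > (1 + 1 / (L + 1)) * A m`.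
-/

def shiftComb (a : ℕ → ℤ) (k : ℕ) (c d : ℤ) : ℕ → ℤ :=
  fun i => (if i = 0 then 0 else c * a (i - 1)) - (if i ≤ k then d * a i else 0)

def SuperGeometric (r : ℕ → ℕ) : Prop :=
  ∀ c : ℕ, ∀ᶠ n in atTop, c * r n < r (n + 1)

theorem opApp_shiftComb (a : ℕ → ℤ) (k : ℕ) (r : ℕ → ℕ) (c d : ℤ) (n : ℕ) :
    opApp (shiftComb a k c d) (k + 1) r n = c * opApp a k r (n + 1) - d * opApp a k r n := by
  simp only [opApp, shiftComb, sub_mul, Finset.sum_sub_distrib, Finset.mul_sum, ite_mul,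
    zero_mul]
  rw [Finset.sum_range_succ' _ (k + 1), Finset.sum_range_succ _ (k + 1)]
  congr 1
  · simp [mul_assoc, add_assoc, add_comm 1]
  · rw [if_neg (by omega), add_zero]
    exact Finset.sum_congr rfl fun i hi => by
      rw [if_pos (Nat.lt_succ_iff.1 (Finset.mem_range.1 hi)), mul_assoc]

theorem opApp_const_one_zero (r : ℕ → ℕ) (n : ℕ) : opApp (fun _ => 1) 0 r n = r n := by
  simp [opApp]

theorem abs_sum_range_mul_le {r : ℕ → ℕ} (hr : Monotone r) (a : ℕ → ℤ) (m n : ℕ) :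
    |∑ i ∈ Finset.range m, a i * (r (n + i) : ℤ)|
      ≤ (∑ i ∈ Finset.range m, |a i|) * r (n + m - 1) := by
  rw [Finset.sum_mul]
  refine (Finset.abs_sum_le_sum_abs _ _).trans (Finset.sum_le_sum fun i hi => ?_)
  rw [abs_mul, Nat.abs_cast]
  have hi : i < m := Finset.mem_range.1 hi
  exact mul_le_mul_of_nonneg_left (by exact_mod_cast hr (by omega)) (abs_nonneg _)

theorem opApp_le {r : ℕ → ℕ} (hr : Monotone r) (a : ℕ → ℤ) (k n : ℕ) :
    opApp a k r n ≤ (∑ i ∈ Finset.range (k + 1), |a i|) * r (n + k) :=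
  (le_abs_self _).trans (abs_sum_range_mul_le hr a (k + 1) n)

theorem le_pow_mul_of_forall_le_mul {u : ℕ → ℕ} {c n₀ : ℕ}
    (h : ∀ n ≥ n₀, u (n + 1) ≤ c * u n) {n : ℕ} (hn : n₀ ≤ n) (t : ℕ) :
    u (n + t) ≤ c ^ t * u n := by
  induction t with
  | zero => simp
  | succ t ih =>
    calc u (n + t + 1) ≤ c * u (n + t) := h _ (by omega)
      _ ≤ c * (c ^ t * u n) := Nat.mul_le_mul_left c ih
      _ = c ^ (t + 1) * u n := by ring

namespace IsSparse

variable {r : ℕ → ℕ} (hs : IsSparse r)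
include hs

theorem eventually_lt_or_eventually_le (a : ℕ → ℤ) (k : ℕ) (c d : ℤ) :
    (∀ᶠ n in atTop, d * opApp a k r n < c * opApp a k r (n + 1)) ∨
      ∀ᶠ n in atTop, c * opApp a k r (n + 1) ≤ d * opApp a k r n := by
  have hB (n : ℕ) := opApp_shiftComb a k r c d n
  rcases (hs (shiftComb a k c d) (k + 1)).1 with h | h | h
  · exact .inr (.of_forall fun n => by linarith [h n, hB n])
  · exact .inl (h.mono fun n hn => by linarith [hB n])
  · exact .inr (h.mono fun n hn => by linarith [hB n])

theorem superGeometric_or_exists_eventually_le :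
    SuperGeometric r ∨ ∃ c : ℕ, ∀ᶠ n in atTop, r (n + 1) ≤ c * r n := by
  refine or_iff_not_imp_left.2 fun h => ?_
  obtain ⟨c, hc⟩ : ∃ c : ℕ, ¬∀ᶠ n in atTop, c * r n < r (n + 1) := by
    simpa [SuperGeometric] using h
  refine ⟨c, ?_⟩
  have := hs.eventually_lt_or_eventually_le (fun _ => 1) 0 1 c
  simp only [opApp_const_one_zero, one_mul] at this
  exact_mod_cast this.resolve_left (by exact_mod_cast hc)

theorem eventually_lt_succ (hr : StrictMono r) {a : ℕ → ℤ} {k : ℕ}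
    (hpos : ∀ᶠ n in atTop, 0 < opApp a k r n) :
    ∀ᶠ n in atTop, opApp a k r n < opApp a k r (n + 1) := by
  have := hs.eventually_lt_or_eventually_le a k 1 1
  simp only [one_mul] at this
  refine this.resolve_right fun hle => ?_
  obtain ⟨Δ, hΔ⟩ := (hs a k).2 hpos
  obtain ⟨n₀, hn₀⟩ := eventually_atTop.1 hle
  have hanti : Antitone fun t => opApp a k r (n₀ + t) :=
    antitone_nat_of_succ_le fun t => hn₀ (n₀ + t) (by omega)
  -- `A` cannot stay below `A n₀` while `A (n + Δ) > r n ≥ n`.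
  set t := (opApp a k r n₀).toNat
  have h₁ := hΔ (n₀ + t)
  have h₂ : opApp a k r (n₀ + (t + Δ)) ≤ opApp a k r (n₀ + 0) := hanti (Nat.zero_le _)
  have h₃ : n₀ + t ≤ r (n₀ + t) := hr.le_apply
  have h₄ := Int.self_le_toNat (opApp a k r n₀)
  rw [← add_assoc, add_zero] at h₂
  omega

theorem exists_lt_sub_of_eventually_lt {a : ℕ → ℤ} {k : ℕ}
    (h : ∀ᶠ n in atTop, opApp a k r n < opApp a k r (n + 1)) :
    ∃ Δ : ℕ, ∀ n, (r n : ℤ) < opApp a k r (n + Δ + 1) - opApp a k r (n + Δ) := by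
  have hD (n : ℕ) := opApp_shiftComb a k r 1 1 n
  simp only [one_mul] at hD
  obtain ⟨Δ, hΔ⟩ := (hs _ _).2 (h.mono fun n hn => by rw [hD]; omega)
  exact ⟨Δ, fun n => hD (n + Δ) ▸ hΔ n⟩

end IsSparse

theorem exists_one_lt_mul_lt_of_eventually_le_mul {r : ℕ → ℕ} (hr : Monotone r) {c : ℕ}
    (hc : ∀ᶠ n in atTop, r (n + 1) ≤ c * r n) {a : ℕ → ℤ} {k Δ : ℕ}
    (hΔ : ∀ n, (r n : ℤ) < opApp a k r (n + Δ + 1) - opApp a k r (n + Δ)) :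
    ∃ q : ℚ, 1 < q ∧ ∀ᶠ n in atTop, q * (opApp a k r n : ℚ) < opApp a k r (n + 1) := by
  obtain ⟨n₀, hn₀⟩ := eventually_atTop.1 hc
  set M := ∑ i ∈ Finset.range (k + 1), |a i|
  set L : ℤ := M * c ^ (Δ + k)
  have hM : 0 ≤ M := Finset.sum_nonneg fun i _ => abs_nonneg _
  have hL : 0 ≤ L := by positivity
  have key : ∀ n ≥ n₀, opApp a k r (n + Δ) <
      (L + 1) * (opApp a k r (n + Δ + 1) - opApp a k r (n + Δ)) := by
    intro n hn
    have h₁ := opApp_le hr a k (n + Δ)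
    have h₂ : (r (n + Δ + k) : ℤ) ≤ c ^ (Δ + k) * r n := by
      rw [add_assoc]; exact_mod_cast le_pow_mul_of_forall_le_mul hn₀ hn (Δ + k)
    have h₃ : M * r (n + Δ + k) ≤ L * r n := by
      simpa only [L, mul_assoc] using mul_le_mul_of_nonneg_left h₂ hM
    nlinarith [hΔ n]
  have hL₁ : (0 : ℚ) < L + 1 := by exact_mod_cast Int.lt_add_one_iff.2 hL
  refine ⟨(L + 2) / (L + 1), (one_lt_div hL₁).2 (by linarith), ?_⟩
  filter_upwards [eventually_ge_atTop (n₀ + Δ)] with m hm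
  obtain ⟨n, rfl⟩ : ∃ n, m = n + Δ := ⟨m - Δ, by omega⟩
  rw [div_mul_eq_mul_div, div_lt_iff₀ hL₁]
  have hkey := key n (by omega)
  exact_mod_cast (by linarith :
    (L + 2) * opApp a k r (n + Δ) < opApp a k r (n + Δ + 1) * (L + 1))

namespace SuperGeometric

variable {r : ℕ → ℕ} (hsg : SuperGeometric r) (hr : Monotone r)
include hsg hr

theorem eventually_two_mul_lt_of_ne_zero {a : ℕ → ℤ} {k : ℕ}
    (hpos : ∀ᶠ n in atTop, 0 < opApp a k r n) (hak : a k ≠ 0) :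
    ∀ᶠ n in atTop, 2 * opApp a k r n < opApp a k r (n + 1) := by
  set M := ∑ i ∈ Finset.range (k + 1), |a i|
  have hM : 0 ≤ M := Finset.sum_nonneg fun i _ => abs_nonneg _
  have hsgk (c : ℕ) : ∀ᶠ n in atTop, (c : ℤ) * r (n + k) < r (n + k + 1) :=
    ((tendsto_add_atTop_nat k).eventually (hsg c)).mono fun n hn => by exact_mod_cast hn
  have hM_cast : ((M.toNat : ℕ) : ℤ) = M := Int.toNat_of_nonneg hM
  have hsplit (n : ℕ) : |opApp a k r (n + 1) - a k * r (n + k + 1)| ≤ M * r (n + k) := by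
    rw [opApp, Finset.sum_range_succ, add_right_comm n 1 k, add_sub_cancel_right]
    refine (abs_sum_range_mul_le hr a k (n + 1)).trans ?_
    rw [show n + 1 + k - 1 = n + k by omega]
    refine mul_le_mul_of_nonneg_right ?_ (Int.natCast_nonneg _)
    exact Finset.sum_le_sum_of_subset_of_nonneg (Finset.range_subset_range.2 (by omega))
      fun i _ _ => abs_nonneg _
  have hlead : 0 < a k := by
    by_contra hneg
    obtain ⟨n, hn, hgrow⟩ :=
      (((tendsto_add_atTop_nat 1).eventually hpos).and (hsgk M.toNat)).exists
    have h₁ : a k * r (n + k + 1) ≤ -1 * r (n + k + 1) :=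
      mul_le_mul_of_nonneg_right (by omega) (Int.natCast_nonneg _)
    rw [hM_cast] at hgrow
    linarith [(abs_le.1 (hsplit n)).2]
  filter_upwards [hsgk (3 * M.toNat)] with n hgrow
  have h₁ : (r (n + k + 1) : ℤ) ≤ a k * r (n + k + 1) :=
    le_mul_of_one_le_left (Int.natCast_nonneg _) hlead
  push_cast [hM_cast] at hgrow
  linarith [(abs_le.1 (hsplit n)).1, opApp_le hr a k n]

theorem eventually_two_mul_lt {a : ℕ → ℤ} {k : ℕ} (hpos : ∀ᶠ n in atTop, 0 < opApp a k r n) :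
    ∀ᶠ n in atTop, 2 * opApp a k r n < opApp a k r (n + 1) := by
  induction k with
  | zero =>
    refine hsg.eventually_two_mul_lt_of_ne_zero hr hpos fun ha => ?_
    obtain ⟨n, hn⟩ := hpos.exists
    simp [opApp, ha] at hn
  | succ k ih =>
    by_cases ha : a (k + 1) = 0
    · have hA : opApp a (k + 1) r = opApp a k r := funext fun n => by
        rw [opApp, Finset.sum_range_succ, ha, zero_mul, add_zero, opApp]
      rw [hA] at hpos ⊢
      exact ih hpos
    · exact hsg.eventually_two_mul_lt_of_ne_zero hr hpos ha

end SuperGeometric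

/-- an eventually positive operator on a sparse set grows at a definite
geometric rate `r > 1`; in particular it is eventually strictly increasing. -/
theorem eventually_geometric_growth (r : ℕ → ℕ) (hmono : StrictMono r) (hsparse : IsSparse r)
    (a : ℕ → ℤ) (k : ℕ) (hpos : ∀ᶠ n in atTop, 0 < opApp a k r n) :
    ∃ q : ℚ, 1 < q ∧
      (∀ᶠ n in atTop, q * (opApp a k r n : ℚ) < (opApp a k r (n + 1) : ℚ)) ∧
      (∀ᶠ n in atTop, opApp a k r n < opApp a k r (n + 1)) := by
  have hinc := hsparse.eventually_lt_succ hmono hpos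
  obtain ⟨q, hq, hgrowth⟩ :
      ∃ q : ℚ, 1 < q ∧ ∀ᶠ n in atTop, q * (opApp a k r n : ℚ) < opApp a k r (n + 1) := by
    rcases hsparse.superGeometric_or_exists_eventually_le with hsg | ⟨c, hc⟩
    · refine ⟨2, one_lt_two, ?_⟩
      filter_upwards [hsg.eventually_two_mul_lt hmono.monotone hpos] with n hn
      exact_mod_cast hn
    · obtain ⟨Δ, hΔ⟩ := hsparse.exists_lt_sub_of_eventually_lt hinc
      exact exists_one_lt_mul_lt_of_eventually_le_mul hmono.monotone hc hΔ
  exact ⟨q, hq, hgrowth, hinc⟩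
end

section
/- Let R ⊆ ℕ be sparse, enumerated by (r_n), and let A be an operator with A < 0 cofinitely on R. Then there exists a rational r > 1 such that A(n+1) < r · A(n) for all sufficiently large n; in particular, n ↦ A(n) is eventually strictly decreasing. -/
open Filter

/-- an eventually negative operator on a sparse set decays at a definite
geometric rate `r > 1`; in particular it is eventually strictly decreasing. -/
theorem eventually_geometric_decay (r : ℕ → ℕ) (hmono : StrictMono r) (hsparse : IsSparse r)
    (a : ℕ → ℤ) (k : ℕ) (hneg : ∀ᶠ n in atTop, opApp a k r n < 0) :
    ∃ q : ℚ, 1 < q ∧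
      (∀ᶠ n in atTop, (opApp a k r (n + 1) : ℚ) < q * (opApp a k r n : ℚ)) ∧
      (∀ᶠ n in atTop, opApp a k r (n + 1) < opApp a k r n) := by
  classical
  -- Step 1: doubling growth of r
  set d : ℕ → ℤ := fun i => if i = 0 then -1 else if i = 1 then 1 else 0 with hd_def
  have hd : ∀ n, opApp d 1 r n = (r (n+1) : ℤ) - (r n : ℤ) := by
    intro n
    simp [opApp, Finset.sum_range_succ, hd_def]
    ring
  obtain ⟨Δ₀, hΔ₀⟩ := (hsparse d 1).2 (Eventually.of_forall (fun n => by
    rw [hd]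
    have h := hmono (show n < n + 1 by omega)
    omega))
  have hstep : ∀ m, 2 * r m ≤ r (m + Δ₀ + 1) := by
    intro m
    have h1 := hΔ₀ m
    rw [hd] at h1
    have h2 : r m ≤ r (m + Δ₀) := hmono.monotone (Nat.le_add_right _ _)
    omega
  have hgrow : ∀ j n, 2^j * r n ≤ r (n + j * (Δ₀+1)) := by
    intro j
    induction j with
    | zero => intro n; simpa using le_refl (r n)
    | succ j ih =>
      intro n
      have h1 := ih n
      have h2 := hstep (n + j * (Δ₀+1))
      have h3 : n + (j+1) * (Δ₀+1) = n + j*(Δ₀+1) + Δ₀ + 1 := by ring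
      rw [h3]
      calc 2^(j+1) * r n = 2 * (2^j * r n) := by ring
      _ ≤ 2 * r (n + j*(Δ₀+1)) := by omega
      _ ≤ _ := h2
  have hr1 : 1 ≤ r 1 := by have := hmono (show 0 < 1 by norm_num); omega
  have h2j : ∀ j, 2^j ≤ r (1 + j * (Δ₀+1)) := by
    intro j
    calc (2:ℕ)^j = 2^j * 1 := (mul_one _).symm
    _ ≤ 2^j * r 1 := Nat.mul_le_mul_left _ hr1
    _ ≤ _ := hgrow j 1
  -- Step 2: rational bound (1+x)^(Δ₀+1) ≤ 4/3 with x = 1/(4(Δ₀+1))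
  set x : ℚ := 1 / (4 * ((Δ₀:ℚ) + 1)) with hx_def
  have hDnn : (0:ℚ) ≤ (Δ₀:ℚ) := Nat.cast_nonneg _
  have hx0 : 0 < x := by rw [hx_def]; positivity
  have hx14 : x ≤ 1/4 := by
    rw [hx_def, div_le_div_iff₀ (by positivity) (by norm_num)]
    nlinarith
  have hPx : ((Δ₀:ℚ) + 1) * x = 1/4 := by
    rw [hx_def]; field_simp
  have hbern : 1 - ((Δ₀:ℚ)+1) * x ≤ (1 - x)^(Δ₀+1) := by
    have h := one_add_mul_le_pow (a := -x) (by nlinarith) (Δ₀+1)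
    push_cast at h
    ring_nf at h ⊢
    linarith
  have h34 : (3/4:ℚ) ≤ (1-x)^(Δ₀+1) := by
    rw [hPx] at hbern; linarith
  have hprod : (1+x)^(Δ₀+1) * (1-x)^(Δ₀+1) ≤ 1 := by
    rw [← mul_pow]
    apply pow_le_one₀ (by nlinarith) (by nlinarith)
  have hup : (1+x)^(Δ₀+1) ≤ 4/3 := by
    have hp : (0:ℚ) < (1+x)^(Δ₀+1) := by positivity
    have h := mul_le_mul_of_nonneg_left h34 (le_of_lt hp)
    linarith
  -- Step 3: the comparison operator F
  set MN : ℕ := 4*(Δ₀+1)+1 with hMN_def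
  set NN : ℕ := 4*(Δ₀+1) with hNN_def
  set f : ℕ → ℤ := fun i =>
    (MN:ℤ) * (if i ≤ k then a i else 0) - (NN:ℤ) * (if i = 0 then 0 else a (i-1)) with hf_def
  have hF : ∀ n, opApp f (k+1) r n
      = (MN:ℤ) * opApp a k r n - (NN:ℤ) * opApp a k r (n+1) := by
    intro n
    have e1 : ∑ i ∈ Finset.range (k+1+1), (if i ≤ k then a i else 0) * ((r (n+i)) : ℤ)
        = opApp a k r n := by
      rw [Finset.sum_range_succ, if_neg (by omega)]
      simp only [zero_mul, add_zero, opApp]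
      exact Finset.sum_congr rfl (fun i hi => by
        rw [if_pos (Nat.lt_succ_iff.mp (Finset.mem_range.mp hi))])
    have e2 : ∑ i ∈ Finset.range (k+1+1), (if i = 0 then 0 else a (i-1)) * ((r (n+i)) : ℤ)
        = opApp a k r (n+1) := by
      rw [Finset.sum_range_succ']
      have h0 : (if (0:ℕ) = 0 then (0:ℤ) else a (0-1)) * ((r (n+0)):ℤ) = 0 := by simp
      rw [h0, add_zero]
      simp only [opApp]
      refine Finset.sum_congr rfl (fun i hi => ?_)
      rw [if_neg (Nat.succ_ne_zero i), Nat.add_sub_cancel,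
        show n + (i+1) = n+1+i from by omega]
    rw [← e1, ← e2]
    simp only [opApp]
    rw [Finset.mul_sum, Finset.mul_sum, ← Finset.sum_sub_distrib]
    exact Finset.sum_congr rfl (fun i _ => by rw [hf_def]; ring)
  -- the good case
  have main : (∀ᶠ n in atTop, 0 ≤ opApp f (k+1) r n) →
      ∃ q : ℚ, 1 < q ∧
      (∀ᶠ n in atTop, (opApp a k r (n + 1) : ℚ) < q * (opApp a k r n : ℚ)) ∧
      (∀ᶠ n in atTop, opApp a k r (n + 1) < opApp a k r n) := by
    intro hge
    have h8 : (0:ℚ) < 1/(8*((Δ₀:ℚ)+1)) := by positivity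
    refine ⟨1 + 1/(8*((Δ₀:ℚ)+1)), by linarith, ?_, ?_⟩
    · filter_upwards [hge, hneg] with n h1 h2
      rw [hF n] at h1
      have hA0 : ((opApp a k r n : ℤ) : ℚ) < 0 := by exact_mod_cast h2
      have h1' : ((NN:ℕ):ℚ) * ((opApp a k r (n+1) : ℤ):ℚ)
          ≤ ((MN:ℕ):ℚ) * ((opApp a k r n : ℤ):ℚ) := by
        have h := h1
        have : ((NN:ℤ):ℚ) * ((opApp a k r (n+1) : ℤ):ℚ)
            ≤ ((MN:ℤ):ℚ) * ((opApp a k r n : ℤ):ℚ) := by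
          exact_mod_cast (by linarith : (NN:ℤ) * opApp a k r (n+1) ≤ (MN:ℤ) * opApp a k r n)
        exact_mod_cast this
      rw [hMN_def, hNN_def] at h1'
      push_cast at h1'
      rw [show (1:ℚ) + 1/(8*((Δ₀:ℚ)+1)) = (8*((Δ₀:ℚ)+1)+1)/(8*((Δ₀:ℚ)+1)) from by field_simp,
        div_mul_eq_mul_div, lt_div_iff₀ (by positivity)]
      nlinarith [h1', hA0]
    · filter_upwards [hge, hneg] with n h1 h2
      rw [hF n] at h1
      have hA0 : ((opApp a k r n : ℤ) : ℚ) < 0 := by exact_mod_cast h2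
      have h1' : ((NN:ℤ):ℚ) * ((opApp a k r (n+1) : ℤ):ℚ)
          ≤ ((MN:ℤ):ℚ) * ((opApp a k r n : ℤ):ℚ) := by
        exact_mod_cast (by linarith : (NN:ℤ) * opApp a k r (n+1) ≤ (MN:ℤ) * opApp a k r n)
      rw [hMN_def, hNN_def] at h1'
      push_cast at h1'
      have : ((opApp a k r (n+1) : ℤ):ℚ) < ((opApp a k r n : ℤ):ℚ) := by nlinarith
      exact_mod_cast this
  rcases (hsparse f (k+1)).1 with h0 | hFpos | hFneg
  · exact main (Eventually.of_forall fun n => le_of_eq (h0 n).symm)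
  · exact main (hFpos.mono fun n h => h.le)
  -- the impossible case
  exfalso
  obtain ⟨N₁, hN₁⟩ := eventually_atTop.mp (hFneg.and hneg)
  have hop : ∀ m, opApp (fun i => -(a i)) k r m = - opApp a k r m := by
    intro m
    simp [opApp, neg_mul, Finset.sum_neg_distrib]
  obtain ⟨Δ₂, hΔ₂⟩ := (hsparse (fun i => -(a i)) k).2 (by
    filter_upwards [hneg] with n h
    rw [hop]; omega)
  have hMN0 : (0:ℤ) ≤ (MN:ℤ) := by positivity
  have hNN0 : (0:ℤ) ≤ (NN:ℤ) := by positivity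
  have hrec : ∀ t, (NN:ℤ)^t * (-(opApp a k r (N₁+t))) ≤ (MN:ℤ)^t * (-(opApp a k r N₁)) := by
    intro t
    induction t with
    | zero => simp
    | succ t ih =>
      have h1 := (hN₁ (N₁+t) (by omega)).1
      rw [hF] at h1
      calc (NN:ℤ)^(t+1) * (-(opApp a k r (N₁+(t+1))))
          = (NN:ℤ)^t * ((NN:ℤ) * (-(opApp a k r (N₁+t+1)))) := by ring_nf
        _ ≤ (NN:ℤ)^t * ((MN:ℤ) * (-(opApp a k r (N₁+t)))) := by
            apply mul_le_mul_of_nonneg_left _ (pow_nonneg hNN0 t)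
            linarith
        _ = (MN:ℤ) * ((NN:ℤ)^t * (-(opApp a k r (N₁+t)))) := by ring
        _ ≤ (MN:ℤ) * ((MN:ℤ)^t * (-(opApp a k r N₁))) := mul_le_mul_of_nonneg_left ih hMN0
        _ = (MN:ℤ)^(t+1) * (-(opApp a k r N₁)) := by ring
  -- set up the contradiction
  set ρ : ℚ := 1 + x with hρ_def
  have hρ1 : 1 < ρ := by rw [hρ_def]; linarith
  have hρeq : ((MN:ℕ):ℚ) / ((NN:ℕ):ℚ) = ρ := by
    rw [hρ_def, hx_def, hMN_def, hNN_def]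
    push_cast
    field_simp
  set BN : ℚ := ((-(opApp a k r N₁) : ℤ) : ℚ) with hBN_def
  have hBN0 : 0 < BN := by
    have h := (hN₁ N₁ le_rfl).2
    rw [hBN_def]
    exact_mod_cast (by linarith : (0:ℤ) < -(opApp a k r N₁))
  obtain ⟨j₀, hj₀⟩ := exists_nat_gt (2 * (ρ^(1+Δ₂) * BN))
  set j := max j₀ N₁ with hj_def
  set nn := 1 + j*(Δ₀+1) with hnn_def
  have hjj₀ : j₀ ≤ j := le_max_left _ _
  have hjN₁ : N₁ ≤ j := le_max_right _ _
  have hmN₁ : N₁ ≤ nn + Δ₂ := by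
    have : j ≤ j * (Δ₀+1) := Nat.le_mul_of_pos_right _ (by omega)
    omega
  set t := nn + Δ₂ - N₁ with ht_def
  have hidx : N₁ + t = nn + Δ₂ := by omega
  have hgeo := hrec t
  rw [hidx] at hgeo
  set Bm : ℚ := ((-(opApp a k r (nn + Δ₂)) : ℤ) : ℚ) with hBm_def
  have c1 : (2:ℚ)^j < Bm := by
    have h1 : (2:ℕ)^j ≤ r nn := h2j j
    have h2 := hΔ₂ nn
    rw [hop] at h2
    have h3 : ((2:ℤ))^j < -(opApp a k r (nn + Δ₂)) :=
      lt_of_le_of_lt (by exact_mod_cast h1) h2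
    rw [hBm_def]
    exact_mod_cast h3
  have c2 : ((NN:ℕ):ℚ)^t * Bm ≤ ((MN:ℕ):ℚ)^t * BN := by
    rw [hBm_def, hBN_def]
    exact_mod_cast hgeo
  have hNNQ : (0:ℚ) < ((NN:ℕ):ℚ) := by
    rw [hNN_def]; push_cast; positivity
  have c3 : Bm ≤ ρ^t * BN := by
    rw [← hρeq, div_pow, div_mul_eq_mul_div, le_div_iff₀ (by positivity)]
    linarith [c2]
  have c4 : ρ^t ≤ ρ^(nn+Δ₂) := pow_le_pow_right₀ hρ1.le (by omega)
  have c5 : ρ^(nn+Δ₂) = ρ^(1+Δ₂) * (ρ^(Δ₀+1))^j := by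
    rw [show nn + Δ₂ = (1+Δ₂) + (Δ₀+1)*j from by rw [hnn_def]; ring, pow_add, pow_mul]
  have c6 : (ρ^(Δ₀+1))^j ≤ ((4:ℚ)/3)^j := by
    apply pow_le_pow_left₀ (by positivity) _ j
    rw [hρ_def]; exact hup
  have c7 : (2:ℚ)^j < ρ^(1+Δ₂) * ((4:ℚ)/3)^j * BN := by
    calc (2:ℚ)^j < Bm := c1
      _ ≤ ρ^t * BN := c3
      _ ≤ ρ^(nn+Δ₂) * BN := mul_le_mul_of_nonneg_right c4 hBN0.le
      _ = ρ^(1+Δ₂) * (ρ^(Δ₀+1))^j * BN := by rw [c5]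
      _ ≤ ρ^(1+Δ₂) * ((4:ℚ)/3)^j * BN := by gcongr
  -- but (3/2)^j is large
  have hKj : ρ^(1+Δ₂) * BN < ((3:ℚ)/2)^j := by
    have hb := one_add_mul_le_pow (a := (1:ℚ)/2) (by norm_num) j
    have hjq : (j₀:ℚ) ≤ (j:ℚ) := by exact_mod_cast hjj₀
    have : (1:ℚ) + 1/2 = 3/2 := by norm_num
    rw [this] at hb
    calc ρ^(1+Δ₂) * BN < (j₀:ℚ)/2 := by linarith
      _ ≤ (j:ℚ)/2 := by linarith
      _ < 1 + (j:ℚ) * (1/2) := by linarith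
      _ ≤ (3/2:ℚ)^j := hb
  have hfin : ρ^(1+Δ₂) * ((4:ℚ)/3)^j * BN < (2:ℚ)^j := by
    have h43 : (0:ℚ) < ((4:ℚ)/3)^j := by positivity
    calc ρ^(1+Δ₂) * ((4:ℚ)/3)^j * BN = (ρ^(1+Δ₂) * BN) * (4/3)^j := by ring
      _ < (3/2:ℚ)^j * (4/3)^j := by exact mul_lt_mul_of_pos_right hKj h43
      _ = ((3/2:ℚ) * (4/3))^j := by rw [← mul_pow]
      _ = (2:ℚ)^j := by norm_num
  linarith
end

section
/- Let R ⊆ ℕ be sparse with enumeration (r_n), and let A_1, ..., A_m be operators each not identically zero on R. Then for all sufficiently large Δ, the map sending an index tuple (n_1, ..., n_m) ∈ R^m_Δ to A_1(n_1) + ... + A_m(n_m) ∈ ℤ is injective; moreover, for distinct tuples z, w in R^m_Δ with e the least index where they differ, the sum at z exceeds the sum at w if and only if (z_e > w_e when A_e is eventually positive) or (z_e < w_e when A_e is eventually negative). -/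
open Filter

/-- The index tuple `z` lies in `R^m_Δ`: `z i ≥ z (i+1) + Δ`, where `z (m+1) := 0`. -/
def InCone (m : ℕ) (Δ : ℕ) (z : Fin m → ℕ) : Prop :=
  ∀ i : Fin m, (if h : (i : ℕ) + 1 < m then z ⟨(i : ℕ) + 1, h⟩ else 0) + Δ ≤ z i


lemma opApp_smul (c : ℤ) (a : ℕ → ℤ) (k : ℕ) (r : ℕ → ℕ) (n : ℕ) :
    opApp (fun j => c * a j) k r n = c * opApp a k r n := by
  simp [opApp, Finset.mul_sum, mul_assoc]

lemma opApp_abs_le (a : ℕ → ℤ) (k : ℕ) (r : ℕ → ℕ) (hr : Monotone r) (n : ℕ) :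
    |opApp a k r n| ≤ (∑ j ∈ Finset.range (k + 1), |a j|) * (r (n + k) : ℤ) := by
  calc |opApp a k r n| ≤ ∑ j ∈ Finset.range (k + 1), |a j * (r (n + j) : ℤ)| :=
        Finset.abs_sum_le_sum_abs _ _
    _ = ∑ j ∈ Finset.range (k + 1), |a j| * (r (n + j) : ℤ) := by
        simp [abs_mul]
    _ ≤ ∑ j ∈ Finset.range (k + 1), |a j| * (r (n + k) : ℤ) := by
        refine Finset.sum_le_sum fun j hj => ?_
        have hjk : n + j ≤ n + k := by
          have := Finset.mem_range.mp hj; omega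
        exact mul_le_mul_of_nonneg_left (by exact_mod_cast hr hjk) (abs_nonneg _)
    _ = (∑ j ∈ Finset.range (k + 1), |a j|) * (r (n + k) : ℤ) := by
        rw [Finset.sum_mul]

/-- Coefficients of the "discrete derivative" operator `n ↦ A(n+1) - A(n)`. -/
def dco (a : ℕ → ℤ) (k : ℕ) : ℕ → ℤ :=
  fun j => (if 1 ≤ j then a (j - 1) else 0) - (if j ≤ k then a j else 0)

lemma opApp_dco (a : ℕ → ℤ) (k : ℕ) (r : ℕ → ℕ) (n : ℕ) :
    opApp (dco a k) (k + 1) r n = opApp a k r (n + 1) - opApp a k r n := by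
  unfold opApp dco
  simp only [sub_mul, Finset.sum_sub_distrib]
  congr 1
  · rw [Finset.sum_range_succ']
    rw [if_neg (by omega : ¬ 1 ≤ 0), zero_mul, add_zero]
    refine Finset.sum_congr rfl fun i _ => ?_
    rw [if_pos (by omega : 1 ≤ i + 1), show i + 1 - 1 = i from rfl,
      show n + (i + 1) = n + 1 + i by omega]
  · rw [Finset.sum_range_succ, if_neg (by omega : ¬ k + 1 ≤ k), zero_mul, add_zero]
    refine Finset.sum_congr rfl fun i hi => ?_
    have hik : i ≤ k := by have := Finset.mem_range.mp hi; omega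
    rw [if_pos hik]

lemma shift_sum (d : ℕ → ℤ) (k' : ℕ) (r : ℕ → ℕ) :
    ∀ s n, ∑ j ∈ Finset.range (k' + s + 1), (if s ≤ j then d (j - s) else 0) * (r (n + j) : ℤ)
      = ∑ i ∈ Finset.range (k' + 1), d i * (r (n + s + i) : ℤ) := by
  intro s
  induction s with
  | zero => intro n; simp
  | succ s ih =>
    intro n
    rw [show k' + (s + 1) + 1 = (k' + s + 1) + 1 by omega, Finset.sum_range_succ']
    rw [if_neg (by omega : ¬ s + 1 ≤ 0), zero_mul, add_zero]
    have : ∀ i, (if s + 1 ≤ i + 1 then d (i + 1 - (s + 1)) else 0) * (r (n + (i + 1)) : ℤ)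
        = (if s ≤ i then d (i - s) else 0) * (r (n + 1 + i) : ℤ) := by
      intro i
      have h2 : i + 1 - (s + 1) = i - s := by omega
      have h3 : n + (i + 1) = n + 1 + i := by omega
      rw [h2, h3]
      congr 1
      exact if_congr (by omega) rfl rfl
    simp only [this]
    rw [ih (n + 1), show n + 1 + s = n + (s + 1) by omega]

lemma opApp_shift_sub (d : ℕ → ℤ) (k' s : ℕ) (L : ℤ) (r : ℕ → ℕ) (n : ℕ) :
    opApp (fun j => (if s ≤ j then d (j - s) else 0) - (if j = 0 then L else 0)) (k' + s) r n
      = opApp d k' r (n + s) - L * (r n : ℤ) := by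
  unfold opApp
  simp only [sub_mul, Finset.sum_sub_distrib]
  congr 1
  · exact shift_sum d k' r s n
  · rw [Finset.sum_eq_single_of_mem 0 (Finset.mem_range.mpr (by omega))]
    · rw [if_pos rfl, Nat.add_zero]
    · intro b _ hb
      rw [if_neg hb, zero_mul]

lemma iter_S2 (r : ℕ → ℕ) (hmono : StrictMono r) (hsparse : IsSparse r)
    (d : ℕ → ℤ) (k' : ℕ) (hpos : ∀ᶠ n in atTop, 0 < opApp d k' r n) :
    ∀ L : ℕ, ∃ s : ℕ, ∀ n, (L : ℤ) * (r n : ℤ) < opApp d k' r (n + s) := by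
  intro L
  induction L with
  | zero =>
    obtain ⟨s, hsn⟩ := (hsparse d k').2 hpos
    refine ⟨s, fun n => ?_⟩
    have := hsn n
    have h0 : (0 : ℤ) ≤ (r n : ℤ) := by positivity
    push_cast
    linarith
  | succ L ih =>
    obtain ⟨s, hsn⟩ := ih
    have hg : ∀ n, 0 < opApp
        (fun j => (if s ≤ j then d (j - s) else 0) - (if j = 0 then (L : ℤ) else 0))
        (k' + s) r n := by
      intro n
      rw [opApp_shift_sub]
      have := hsn n
      linarith
    obtain ⟨Δ, hΔ⟩ := (hsparse _ (k' + s)).2 (Eventually.of_forall hg)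
    refine ⟨s + Δ, fun n => ?_⟩
    have h1 := hΔ n
    rw [opApp_shift_sub] at h1
    have h2 : (r n : ℤ) ≤ (r (n + Δ) : ℤ) := by
      exact_mod_cast hmono.monotone (by omega : n ≤ n + Δ)
    have h3 : (0 : ℤ) ≤ L := by positivity
    have h4 : (L : ℤ) * (r n : ℤ) ≤ (L : ℤ) * (r (n + Δ) : ℤ) :=
      mul_le_mul_of_nonneg_left h2 h3
    rw [show n + Δ + s = n + (s + Δ) by omega] at h1
    push_cast
    nlinarith [h1, h4]

lemma deriv_evpos (r : ℕ → ℕ) (hmono : StrictMono r) (hsparse : IsSparse r)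
    (b : ℕ → ℤ) (k : ℕ) (hB : ∀ᶠ n in atTop, 0 < opApp b k r n) :
    ∀ᶠ n in atTop, 0 < opApp (dco b k) (k + 1) r n := by
  rcases (hsparse (dco b k) (k + 1)).1 with h0 | hp | hn
  · exfalso
    have hconst : ∀ n, opApp b k r n = opApp b k r 0 := by
      intro n
      induction n with
      | zero => rfl
      | succ n ih =>
        have h := h0 n
        rw [opApp_dco] at h
        linarith
    obtain ⟨n0, hn0⟩ := hB.exists
    have hc : 0 < opApp b k r 0 := by rw [← hconst n0]; exact hn0
    obtain ⟨Δ, hΔ⟩ := (hsparse b k).2 hB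
    have h1 := hΔ (opApp b k r 0).toNat
    rw [hconst ((opApp b k r 0).toNat + Δ)] at h1
    have h2 : (opApp b k r 0).toNat ≤ r (opApp b k r 0).toNat := hmono.le_apply
    have h3 : ((opApp b k r 0).toNat : ℤ) = opApp b k r 0 := Int.toNat_of_nonneg (le_of_lt hc)
    have h4 : ((opApp b k r 0).toNat : ℤ) ≤ (r (opApp b k r 0).toNat : ℤ) := by exact_mod_cast h2
    linarith
  · exact hp
  · exfalso
    rw [eventually_atTop] at hn hB
    obtain ⟨N0, hN0⟩ := hn
    obtain ⟨N1, hN1⟩ := hB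
    have hdec : ∀ t : ℕ, opApp b k r (N0 + t) ≤ opApp b k r N0 - t := by
      intro t
      induction t with
      | zero => simp
      | succ t ih =>
        have h := hN0 (N0 + t) (by omega)
        rw [opApp_dco] at h
        have he : N0 + (t + 1) = N0 + t + 1 := by omega
        rw [he]
        push_cast
        linarith
    have h1 := hdec (N1 + (opApp b k r N0).toNat + 1)
    have h2 := hN1 (N0 + (N1 + (opApp b k r N0).toNat + 1)) (by omega)
    have h3 : opApp b k r N0 ≤ ((opApp b k r N0).toNat : ℤ) := Int.self_le_toNat _
    push_cast at h1
    linarith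

/-- ordering lemma: for sufficiently large `Δ`, the map
`z ↦ Σ_i A_i(z_i)` is injective on `R^m_Δ`, and for distinct tuples the order of the
sums is decided at the least index of disagreement, according to the eventual sign
of the corresponding operator. -/
theorem ordering_lemma (r : ℕ → ℕ) (hmono : StrictMono r) (hsparse : IsSparse r)
    (m : ℕ) (a : Fin m → ℕ → ℤ) (K : Fin m → ℕ)
    (hnz : ∀ i : Fin m, ¬ ∀ n, opApp (a i) (K i) r n = 0) :
    ∀ᶠ Δ : ℕ in atTop,
      Set.InjOn (fun z : Fin m → ℕ => ∑ i, opApp (a i) (K i) r (z i)) {z | InCone m Δ z} ∧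
      ∀ z w : Fin m → ℕ, InCone m Δ z → InCone m Δ w →
        ∀ e : Fin m, z e ≠ w e → (∀ j : Fin m, j < e → z j = w j) →
          ((∀ᶠ n in atTop, 0 < opApp (a e) (K e) r n) →
            ((∑ i, opApp (a i) (K i) r (w i)) < (∑ i, opApp (a i) (K i) r (z i)) ↔
              w e < z e)) ∧
          ((∀ᶠ n in atTop, opApp (a e) (K e) r n < 0) →
            ((∑ i, opApp (a i) (K i) r (w i)) < (∑ i, opApp (a i) (K i) r (z i)) ↔
              z e < w e)) := by
  classical
  -- choose signs
  have hsign : ∀ i : Fin m, ∃ ε : ℤ, (ε = 1 ∨ ε = -1) ∧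
      ∀ᶠ n in atTop, 0 < opApp (fun j => ε * a i j) (K i) r n := by
    intro i
    rcases (hsparse (a i) (K i)).1 with h0 | hp | hn
    · exact absurd h0 (hnz i)
    · refine ⟨1, Or.inl rfl, ?_⟩
      refine hp.mono fun n hn => ?_
      rw [opApp_smul, one_mul]; exact hn
    · refine ⟨-1, Or.inr rfl, ?_⟩
      refine hn.mono fun n hn' => ?_
      rw [opApp_smul]; linarith
  choose ε hε1 hεpos using hsign
  have hεD : ∀ i : Fin m, ∀ᶠ n in atTop,
      0 < opApp (dco (fun j => ε i * a i j) (K i)) (K i + 1) r n :=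
    fun i => deriv_evpos r hmono hsparse _ _ (hεpos i)
  -- constants
  set C : Fin m → ℤ := fun i => ∑ j ∈ Finset.range (K i + 1), |a i j| with hC
  have hC0 : ∀ i, 0 ≤ C i := fun i => Finset.sum_nonneg fun j _ => abs_nonneg _
  set Lint : ℤ := 2 * ∑ i, C i with hLint
  have hL0 : 0 ≤ Lint := by
    have : (0:ℤ) ≤ ∑ i, C i := Finset.sum_nonneg fun i _ => hC0 i
    omega
  set Lnat : ℕ := Lint.toNat with hLnat
  have hLcast : (Lnat : ℤ) = Lint := Int.toNat_of_nonneg hL0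
  have hsex : ∀ i : Fin m, ∃ s : ℕ, ∀ n,
      (Lnat : ℤ) * (r n : ℤ) < opApp (dco (fun j => ε i * a i j) (K i)) (K i + 1) r (n + s) :=
    fun i => iter_S2 r hmono hsparse _ _ (hεD i) Lnat
  choose s hs using hsex
  set Kmax : ℕ := Finset.univ.sup K with hKmax
  set smax : ℕ := Finset.univ.sup s with hsmax
  have hKle : ∀ i, K i ≤ Kmax := fun i => Finset.le_sup (Finset.mem_univ i)
  have hsle : ∀ i, s i ≤ smax := fun i => Finset.le_sup (Finset.mem_univ i)
  rw [eventually_atTop]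
  refine ⟨smax + Kmax + 1, fun Δ hΔ => ?_⟩
  -- cone facts
  have hvΔ : ∀ v : Fin m → ℕ, InCone m Δ v → ∀ i, Δ ≤ v i :=
    fun v hv i => le_trans (Nat.le_add_left _ _) (hv i)
  have hstep : ∀ v : Fin m → ℕ, InCone m Δ v → ∀ (q : ℕ) (hq : q + 1 < m),
      v ⟨q + 1, hq⟩ ≤ v ⟨q, by omega⟩ := by
    intro v hv q hq
    have h := hv ⟨q, by omega⟩
    rw [dif_pos hq] at h
    exact le_trans (Nat.le_add_right _ _) h
  have hanti : ∀ v : Fin m → ℕ, InCone m Δ v → ∀ (p q : ℕ) (hpq : p ≤ q) (hq : q < m),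
      v ⟨q, hq⟩ ≤ v ⟨p, by omega⟩ := by
    intro v hv p q
    induction q with
    | zero =>
      intro hpq hq
      have : p = 0 := by omega
      subst this
      exact le_refl _
    | succ q ih =>
      intro hpq hq
      rcases Nat.eq_or_lt_of_le hpq with h | h
      · subst h; exact le_refl _
      · exact le_trans (hstep v hv q hq) (ih (by omega) (by omega))
  -- the key inequality
  have key : ∀ z w : Fin m → ℕ, InCone m Δ z → InCone m Δ w →
      ∀ e : Fin m, (∀ j : Fin m, j < e → z j = w j) → w e < z e →
      0 < ε e * ((∑ i, opApp (a i) (K i) r (z i)) - (∑ i, opApp (a i) (K i) r (w i))) := by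
    intro z w hz hw e hagree hwe
    obtain ⟨t, htz, htw, htze⟩ :
        ∃ t : ℕ, (∀ i : Fin m, e < i → z i ≤ t) ∧ (∀ i : Fin m, e < i → w i ≤ t) ∧
          t + Kmax + s e + 1 ≤ z e := by
      by_cases hem : (e : ℕ) + 1 < m
      · refine ⟨max (z ⟨(e : ℕ) + 1, hem⟩) (w ⟨(e : ℕ) + 1, hem⟩), ?_, ?_, ?_⟩
        · intro i hi
          have h1 : z i ≤ z ⟨(e : ℕ) + 1, hem⟩ :=
            hanti z hz ((e : ℕ) + 1) (i : ℕ) (Fin.lt_def.mp hi) i.isLt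
          exact le_trans h1 (le_max_left _ _)
        · intro i hi
          have h1 : w i ≤ w ⟨(e : ℕ) + 1, hem⟩ :=
            hanti w hw ((e : ℕ) + 1) (i : ℕ) (Fin.lt_def.mp hi) i.isLt
          exact le_trans h1 (le_max_right _ _)
        · have h1 := hz e
          rw [dif_pos hem] at h1
          have h2 := hw e
          rw [dif_pos hem] at h2
          have h3 := hsle e
          omega
      · refine ⟨0, ?_, ?_, ?_⟩
        · intro i hi
          exfalso
          have h1 := i.isLt
          have h2 := Fin.lt_def.mp hi
          omega
        · intro i hi
          exfalso
          have h1 := i.isLt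
          have h2 := Fin.lt_def.mp hi
          omega
        · have h1 := hvΔ z hz e
          have h2 := hsle e
          omega
    set T : ℤ := ∑ i ∈ Finset.univ.filter (fun i => e < i),
        (opApp (a i) (K i) r (z i) - opApp (a i) (K i) r (w i)) with hT
    have hsplit : (∑ i, opApp (a i) (K i) r (z i)) - (∑ i, opApp (a i) (K i) r (w i))
        = (opApp (a e) (K e) r (z e) - opApp (a e) (K e) r (w e)) + T := by
      rw [← Finset.sum_sub_distrib]
      rw [← Finset.sum_filter_add_sum_filter_not Finset.univ (fun i => e < i)
        (fun i => opApp (a i) (K i) r (z i) - opApp (a i) (K i) r (w i))]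
      have h1 : ∑ i ∈ Finset.univ.filter (fun i => ¬ e < i),
          (opApp (a i) (K i) r (z i) - opApp (a i) (K i) r (w i))
          = opApp (a e) (K e) r (z e) - opApp (a e) (K e) r (w e) := by
        refine Finset.sum_eq_single e ?_ ?_
        · intro b hb hbe
          have hble : ¬ e < b := (Finset.mem_filter.mp hb).2
          have hblt : b < e := lt_of_le_of_ne (not_lt.mp hble) hbe
          rw [hagree b hblt]
          ring
        · intro h
          exact absurd (Finset.mem_filter.mpr ⟨Finset.mem_univ e, lt_irrefl e⟩) h
      rw [h1, hT]
      ring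
    have htail : |T| ≤ (Lnat : ℤ) * (r (t + Kmax) : ℤ) := by
      have hterm : ∀ i ∈ Finset.univ.filter (fun i => e < i),
          |opApp (a i) (K i) r (z i) - opApp (a i) (K i) r (w i)|
            ≤ 2 * C i * (r (t + Kmax) : ℤ) := by
        intro i hi
        have hie : e < i := (Finset.mem_filter.mp hi).2
        have hz1 : |opApp (a i) (K i) r (z i)| ≤ C i * (r (z i + K i) : ℤ) :=
          opApp_abs_le (a i) (K i) r hmono.monotone (z i)
        have hw1 : |opApp (a i) (K i) r (w i)| ≤ C i * (r (w i + K i) : ℤ) :=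
          opApp_abs_le (a i) (K i) r hmono.monotone (w i)
        have hz2 : (r (z i + K i) : ℤ) ≤ (r (t + Kmax) : ℤ) := by
          have hle : z i + K i ≤ t + Kmax := by
            have := htz i hie
            have := hKle i
            omega
          exact_mod_cast hmono.monotone hle
        have hw2 : (r (w i + K i) : ℤ) ≤ (r (t + Kmax) : ℤ) := by
          have hle : w i + K i ≤ t + Kmax := by
            have := htw i hie
            have := hKle i
            omega
          exact_mod_cast hmono.monotone hle
        have hz3 : C i * (r (z i + K i) : ℤ) ≤ C i * (r (t + Kmax) : ℤ) :=
          mul_le_mul_of_nonneg_left hz2 (hC0 i)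
        have hw3 : C i * (r (w i + K i) : ℤ) ≤ C i * (r (t + Kmax) : ℤ) :=
          mul_le_mul_of_nonneg_left hw2 (hC0 i)
        calc |opApp (a i) (K i) r (z i) - opApp (a i) (K i) r (w i)|
            ≤ |opApp (a i) (K i) r (z i)| + |opApp (a i) (K i) r (w i)| := abs_sub _ _
          _ ≤ 2 * C i * (r (t + Kmax) : ℤ) := by linarith
      have hcast0 : (0 : ℤ) ≤ (r (t + Kmax) : ℤ) := by positivity
      calc |T| ≤ ∑ i ∈ Finset.univ.filter (fun i => e < i),
            |opApp (a i) (K i) r (z i) - opApp (a i) (K i) r (w i)| := by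
            rw [hT]; exact Finset.abs_sum_le_sum_abs _ _
        _ ≤ ∑ i ∈ Finset.univ.filter (fun i => e < i), 2 * C i * (r (t + Kmax) : ℤ) :=
            Finset.sum_le_sum hterm
        _ ≤ ∑ i : Fin m, 2 * C i * (r (t + Kmax) : ℤ) :=
            Finset.sum_le_sum_of_subset_of_nonneg (Finset.filter_subset _ _)
              (fun i _ _ => mul_nonneg (mul_nonneg (by norm_num) (hC0 i)) hcast0)
        _ = (Lnat : ℤ) * (r (t + Kmax) : ℤ) := by
            rw [hLcast, hLint, ← Finset.sum_mul, ← Finset.mul_sum]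
    have hDn : ∀ n, s e ≤ n →
        (Lnat : ℤ) * (r (n - s e) : ℤ)
          < opApp (fun j => ε e * a e j) (K e) r (n + 1)
            - opApp (fun j => ε e * a e j) (K e) r n := by
      intro n hn
      have h := hs e (n - s e)
      rw [show n - s e + s e = n from by omega] at h
      rw [← opApp_dco]
      exact h
    have hBmono : ∀ p q : ℕ, s e ≤ p → p ≤ q →
        opApp (fun j => ε e * a e j) (K e) r p ≤ opApp (fun j => ε e * a e j) (K e) r q := by
      intro p q hp hpq
      induction q, hpq using Nat.le_induction with
      | base => exact le_refl _
      | succ q hq ih =>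
        have h := hDn q (le_trans hp hq)
        have h0 : (0 : ℤ) ≤ (Lnat : ℤ) * (r (q - s e) : ℤ) := by positivity
        linarith
    have hsΔ : s e ≤ Δ := le_trans (hsle e) (by omega)
    have hweΔ : Δ ≤ w e := hvΔ w hw e
    have hhead : (Lnat : ℤ) * (r (t + Kmax) : ℤ)
        < opApp (fun j => ε e * a e j) (K e) r (z e)
          - opApp (fun j => ε e * a e j) (K e) r (w e) := by
      have h1 : opApp (fun j => ε e * a e j) (K e) r (w e)
          ≤ opApp (fun j => ε e * a e j) (K e) r (z e - 1) :=
        hBmono (w e) (z e - 1) (by omega) (by omega)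
      have h2 := hDn (z e - 1) (by omega)
      rw [show z e - 1 + 1 = z e from by omega] at h2
      have h3 : (Lnat : ℤ) * (r (t + Kmax) : ℤ) ≤ (Lnat : ℤ) * (r (z e - 1 - s e) : ℤ) := by
        have hle : (r (t + Kmax) : ℤ) ≤ (r (z e - 1 - s e) : ℤ) := by
          exact_mod_cast hmono.monotone (by omega : t + Kmax ≤ z e - 1 - s e)
        exact mul_le_mul_of_nonneg_left hle (by positivity)
      linarith
    rw [hsplit, mul_add]
    have hF : ε e * (opApp (a e) (K e) r (z e) - opApp (a e) (K e) r (w e))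
        = opApp (fun j => ε e * a e j) (K e) r (z e)
          - opApp (fun j => ε e * a e j) (K e) r (w e) := by
      rw [opApp_smul, opApp_smul]
      ring
    rw [hF]
    have hT2 : -((Lnat : ℤ) * (r (t + Kmax) : ℤ)) ≤ ε e * T := by
      rcases hε1 e with h | h
      · rw [h, one_mul]
        linarith [neg_abs_le T]
      · rw [h]
        have := le_abs_self T
        linarith
    linarith
  have hε_of_pos : ∀ i, (∀ᶠ n in atTop, 0 < opApp (a i) (K i) r n) → ε i = 1 := by
    intro i hp
    rcases hε1 i with h | h
    · exact h
    · exfalso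
      have h2 := hεpos i
      rw [h] at h2
      obtain ⟨n, hn1, hn2⟩ := (h2.and hp).exists
      rw [opApp_smul] at hn1
      linarith
  have hε_of_neg : ∀ i, (∀ᶠ n in atTop, opApp (a i) (K i) r n < 0) → ε i = -1 := by
    intro i hp
    rcases hε1 i with h | h
    · exfalso
      have h2 := hεpos i
      rw [h] at h2
      obtain ⟨n, hn1, hn2⟩ := (h2.and hp).exists
      rw [opApp_smul, one_mul] at hn1
      linarith
    · exact h
  constructor
  · -- injectivity
    intro z hz w hw hS
    by_contra hne
    have hex : ∃ i, z i ≠ w i := Function.ne_iff.mp hne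
    have hFne : (Finset.univ.filter (fun i => z i ≠ w i)).Nonempty :=
      ⟨hex.choose, Finset.mem_filter.mpr ⟨Finset.mem_univ _, hex.choose_spec⟩⟩
    obtain ⟨e, he1, he2⟩ : ∃ e : Fin m, z e ≠ w e ∧ ∀ j : Fin m, j < e → z j = w j := by
      refine ⟨(Finset.univ.filter (fun i => z i ≠ w i)).min' hFne, ?_, ?_⟩
      · exact (Finset.mem_filter.mp (Finset.min'_mem _ hFne)).2
      · intro j hj
        by_contra h
        have : (Finset.univ.filter (fun i => z i ≠ w i)).min' hFne ≤ j :=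
          Finset.min'_le _ j (Finset.mem_filter.mpr ⟨Finset.mem_univ _, h⟩)
        exact absurd hj (not_lt.mpr this)
    have hS' : (∑ i, opApp (a i) (K i) r (z i)) = (∑ i, opApp (a i) (K i) r (w i)) := hS
    rcases Nat.lt_or_ge (w e) (z e) with h | h
    · have := key z w hz hw e he2 h
      rw [hS'] at this
      simp at this
    · have h' : z e < w e := lt_of_le_of_ne h he1
      have := key w z hw hz e (fun j hj => (he2 j hj).symm) h'
      rw [hS'] at this
      simp at this
  · -- ordering
    intro z w hz hw e hne hagree
    constructor
    · intro hp
      have hεe := hε_of_pos e hp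
      constructor
      · intro hlt
        by_contra hc
        have hzw : z e < w e := lt_of_le_of_ne (Nat.le_of_not_lt hc) hne
        have := key w z hw hz e (fun j hj => (hagree j hj).symm) hzw
        rw [hεe, one_mul] at this
        linarith
      · intro hwe
        have := key z w hz hw e hagree hwe
        rw [hεe, one_mul] at this
        linarith
    · intro hp
      have hεe := hε_of_neg e hp
      constructor
      · intro hlt
        by_contra hc
        have hzw : w e < z e := lt_of_le_of_ne (Nat.le_of_not_lt hc) (Ne.symm hne)
        have := key z w hz hw e hagree hzw
        rw [hεe] at this
        linarith
      · intro hze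
        have := key w z hw hz e (fun j hj => (hagree j hj).symm) hze
        rw [hεe] at this
        linarith
end

section
/- For d ≥ 2, the map (z_1, z_2, z_3) ↦ z_1 + 2·z_2 + 4·z_3 is injective on the set of triples of powers of d satisfying z_1 ≥ d^2·z_2 and z_2 ≥ d^2·z_3 and z_3 ≥ 1 — but fails to be injective on arbitrary triples of powers of 2 (e.g. 96 = 32 + 2·16 + 4·8 = 64 + 2·8 + 4·4). -/
lemma pow_trichotomy (d : ℕ) (hd : 2 ≤ d) (m n : ℕ) :
    d ^ m = d ^ n ∨ d * d ^ m ≤ d ^ n ∨ d * d ^ n ≤ d ^ m := by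
  rcases lt_trichotomy m n with h | h | h
  · right; left
    calc d * d ^ m = d ^ (m + 1) := by ring
    _ ≤ d ^ n := Nat.pow_le_pow_right (by omega) (by omega)
  · left; rw [h]
  · right; right
    calc d * d ^ n = d ^ (n + 1) := by ring
    _ ≤ d ^ m := Nat.pow_le_pow_right (by omega) (by omega)

/-- for `d ≥ 2`, the map `(z₁,z₂,z₃) ↦ z₁ + 2z₂ + 4z₃` is injective on
triples of powers of `d` with `z₁ ≥ d²z₂`, `z₂ ≥ d²z₃`, `z₃ ≥ 1`; but it is not
injective on arbitrary triples of powers of `2`, as witnessed by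
`96 = 32 + 2·16 + 4·8 = 64 + 2·8 + 4·4`. -/
theorem spread_injective_but_not_in_general (d : ℕ) (hd : 2 ≤ d) :
    (∀ z1 z2 z3 w1 w2 w3 : ℕ,
      (∃ n, z1 = d ^ n) → (∃ n, z2 = d ^ n) → (∃ n, z3 = d ^ n) →
      (∃ n, w1 = d ^ n) → (∃ n, w2 = d ^ n) → (∃ n, w3 = d ^ n) →
      d ^ 2 * z2 ≤ z1 → d ^ 2 * z3 ≤ z2 → 1 ≤ z3 →
      d ^ 2 * w2 ≤ w1 → d ^ 2 * w3 ≤ w2 → 1 ≤ w3 →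
      z1 + 2 * z2 + 4 * z3 = w1 + 2 * w2 + 4 * w3 →
      z1 = w1 ∧ z2 = w2 ∧ z3 = w3) ∧
    ((32 : ℕ) + 2 * 16 + 4 * 8 = 64 + 2 * 8 + 4 * 4 ∧
      (∃ n, (32 : ℕ) = 2 ^ n) ∧ (∃ n, (16 : ℕ) = 2 ^ n) ∧ (∃ n, (8 : ℕ) = 2 ^ n) ∧
      (∃ n, (64 : ℕ) = 2 ^ n) ∧ (∃ n, (4 : ℕ) = 2 ^ n) ∧
      ((32 : ℕ), (16 : ℕ), (8 : ℕ)) ≠ ((64 : ℕ), (8 : ℕ), (4 : ℕ))) := by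
  constructor
  · rintro z1 z2 z3 w1 w2 w3 ⟨a1, rfl⟩ ⟨a2, rfl⟩ ⟨a3, rfl⟩ ⟨b1, rfl⟩ ⟨b2, rfl⟩ ⟨b3, rfl⟩
      h1 h2 h3 h4 h5 h6 heq
    have hd4 : 4 ≤ d ^ 2 := by nlinarith
    have e2 : 4 * d ^ a2 ≤ d ^ a1 := le_trans (Nat.mul_le_mul_right _ hd4) h1
    have e3 : 4 * d ^ a3 ≤ d ^ a2 := le_trans (Nat.mul_le_mul_right _ hd4) h2
    have f2 : 4 * d ^ b2 ≤ d ^ b1 := le_trans (Nat.mul_le_mul_right _ hd4) h4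
    have f3 : 4 * d ^ b3 ≤ d ^ b2 := le_trans (Nat.mul_le_mul_right _ hd4) h5
    have hz1 : d ^ a1 = d ^ b1 := by
      rcases pow_trichotomy d hd a1 b1 with h | h | h
      · exact h
      · have : 2 * d ^ a1 ≤ d ^ b1 := le_trans (Nat.mul_le_mul_right _ hd) h
        linarith
      · have : 2 * d ^ b1 ≤ d ^ a1 := le_trans (Nat.mul_le_mul_right _ hd) h
        linarith
    have hz2 : d ^ a2 = d ^ b2 := by
      rcases pow_trichotomy d hd a2 b2 with h | h | h
      · exact h
      · have : 2 * d ^ a2 ≤ d ^ b2 := le_trans (Nat.mul_le_mul_right _ hd) h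
        linarith
      · have : 2 * d ^ b2 ≤ d ^ a2 := le_trans (Nat.mul_le_mul_right _ hd) h
        linarith
    refine ⟨hz1, hz2, by omega⟩
  · exact ⟨by norm_num, ⟨5, by norm_num⟩, ⟨4, by norm_num⟩, ⟨3, by norm_num⟩,
      ⟨6, by norm_num⟩, ⟨2, by norm_num⟩, by simp⟩
end

section
/- Let R ⊆ ℕ be sparse, enumerated by (r_n). Then the ratio r_{n+1}/r_n converges to some θ ∈ ℝ with θ > 1, or tends to infinity. -/
open Filter

lemma opApp_pair (p q : ℤ) (r : ℕ → ℕ) (n : ℕ) :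
    opApp (fun i => if i = 0 then -p else if i = 1 then q else 0) 1 r n
      = q * (r (n+1) : ℤ) - p * (r n : ℤ) := by
  simp [opApp, Finset.sum_range_succ]; ring

/-- if `R` is sparse, enumerated by `(r_n)`, then `r_{n+1}/r_n`
converges to some real `θ > 1` or tends to infinity. -/
theorem sparse_ratio_converges (r : ℕ → ℕ) (hmono : StrictMono r) (hsparse : IsSparse r) :
    (∃ θ : ℝ, 1 < θ ∧
      Tendsto (fun n => (r (n + 1) : ℝ) / (r n : ℝ)) atTop (nhds θ)) ∨
    Tendsto (fun n => (r (n + 1) : ℝ) / (r n : ℝ)) atTop atTop := by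
  set x : ℕ → ℝ := fun n => (r (n + 1) : ℝ) / (r n : ℝ) with hxdef
  have hrpos : ∀ n : ℕ, 1 ≤ n → 0 < (r n : ℝ) := by
    intro n hn
    have : n ≤ r n := hmono.le_apply
    exact_mod_cast lt_of_lt_of_le hn this
  have hlow : ∀ᶠ n in atTop, 1 < x n := by
    filter_upwards [eventually_ge_atTop 1] with n hn
    have h1 : (r n : ℝ) < r (n + 1) := by exact_mod_cast hmono (Nat.lt_succ_self n)
    exact (one_lt_div (hrpos n hn)).2 h1
  -- trichotomy for integer pairs
  have tri : ∀ p q : ℤ, (∀ n, q * (r (n+1) : ℤ) = p * (r n : ℤ)) ∨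
      (∀ᶠ n in atTop, p * (r n : ℤ) < q * (r (n+1) : ℤ)) ∨
      (∀ᶠ n in atTop, q * (r (n+1) : ℤ) < p * (r n : ℤ)) := by
    intro p q
    rcases (hsparse (fun i => if i = 0 then -p else if i = 1 then q else 0) 1).1 with h | h | h
    · left; intro n; have := h n; rw [opApp_pair] at this; linarith
    · right; left; exact h.mono fun n hn => by rw [opApp_pair] at hn; linarith
    · right; right; exact h.mono fun n hn => by rw [opApp_pair] at hn; linarith
  -- rational trichotomy for the ratio
  have ratio_tri : ∀ c : ℚ, 0 < c →
      (∀ᶠ n in atTop, (c : ℝ) < x n) ∨ (∀ᶠ n in atTop, x n ≤ (c : ℝ)) := by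
    intro c hc
    have hq : (0 : ℝ) < (c.den : ℝ) := by exact_mod_cast c.pos
    have hcast : (c : ℝ) = (c.num : ℝ) / (c.den : ℝ) := by
      rw [Rat.cast_def]
    rcases tri c.num (c.den : ℤ) with h | h | h
    · right
      filter_upwards [eventually_ge_atTop 1] with n hn
      have h2 : ((c.den : ℤ) : ℝ) * (r (n+1) : ℝ) = (c.num : ℝ) * (r n : ℝ) := by
        exact_mod_cast congrArg (fun z : ℤ => (z : ℝ)) (h n)
      have := hrpos n hn
      rw [hxdef, hcast]
      rw [div_le_div_iff₀ this hq]
      push_cast at h2 ⊢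
      linarith
    · left
      filter_upwards [h, eventually_ge_atTop 1] with n hn hn1
      have h2 : (c.num : ℝ) * (r n : ℝ) < (c.den : ℝ) * (r (n+1) : ℝ) := by
        exact_mod_cast hn
      have := hrpos n hn1
      rw [hxdef, hcast, div_lt_div_iff₀ hq this]
      linarith
    · right
      filter_upwards [h, eventually_ge_atTop 1] with n hn hn1
      have h2 : (c.den : ℝ) * (r (n+1) : ℝ) < (c.num : ℝ) * (r n : ℝ) := by
        exact_mod_cast hn
      have := hrpos n hn1
      rw [hxdef, hcast, div_le_div_iff₀ this hq]
      nlinarith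
  by_cases hA : ∀ M : ℕ, ∀ᶠ n in atTop, (M : ℝ) < x n
  · right
    rw [tendsto_atTop]
    intro b
    filter_upwards [hA ⌈b⌉₊] with n hn
    exact le_trans (Nat.le_ceil b) hn.le
  -- bounded case
  push_neg at hA
  obtain ⟨M, hM⟩ := hA
  have hbdd : ∀ᶠ n in atTop, x n ≤ ((M : ℚ) + 1 : ℚ) := by
    rcases ratio_tri ((M : ℚ) + 1) (by positivity) with h | h
    · exact absurd (h.mono fun n hn => by push_cast at hn ⊢; linarith) hM
    · exact h
  have hBu : IsBoundedUnder (· ≤ ·) atTop x := ⟨((M : ℚ) + 1 : ℚ), eventually_map.2 hbdd⟩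
  have hBl : IsBoundedUnder (· ≥ ·) atTop x := ⟨1, eventually_map.2 (hlow.mono fun n h => h.le)⟩
  set θ := limsup x atTop with hθdef
  have hliminf_ge : (1 : ℝ) ≤ liminf x atTop :=
    le_liminf_of_le hBu.isCoboundedUnder_ge (hlow.mono fun n h => h.le)
  have heq : liminf x atTop = θ := by
    by_contra hne
    have hlt : liminf x atTop < θ := lt_of_le_of_ne (liminf_le_limsup hBu hBl) hne
    obtain ⟨c, hc1, hc2⟩ := exists_rat_btwn hlt
    have hcpos : (0 : ℚ) < c := by
      have : (0 : ℝ) < (c : ℝ) := lt_of_lt_of_le (by linarith) (le_of_lt hc1) |>.trans_le le_rfl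
      exact_mod_cast this
    rcases ratio_tri c hcpos with h | h
    · exact absurd (le_liminf_of_le hBu.isCoboundedUnder_ge (h.mono fun n hn => hn.le))
        (not_le.2 hc1)
    · exact absurd (limsup_le_of_le hBl.isCoboundedUnder_le h) (not_le.2 hc2)
  have hθ1 : (1 : ℝ) ≤ θ := heq ▸ hliminf_ge
  have htends : Tendsto x atTop (nhds θ) := tendsto_of_liminf_eq_limsup heq rfl hBu hBl
  -- use (S2) to show θ > 1
  have hpos : ∀ᶠ n in atTop,
      0 < opApp (fun i => if i = 0 then -(1:ℤ) else if i = 1 then 1 else 0) 1 r n := by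
    apply Eventually.of_forall
    intro n
    rw [opApp_pair]
    have : (r n : ℤ) < r (n+1) := by exact_mod_cast hmono (Nat.lt_succ_self n)
    linarith
  obtain ⟨Δ, hΔ⟩ := (hsparse (fun i => if i = 0 then -(1:ℤ) else if i = 1 then 1 else 0) 1).2 hpos
  have hS2 : ∀ n, (r n : ℝ) < (r (n + Δ + 1) : ℝ) - (r (n + Δ) : ℝ) := by
    intro n
    have h1 := hΔ n
    rw [opApp_pair] at h1
    have h2 : (r n : ℤ) < (r (n + Δ + 1) : ℤ) - (r (n + Δ) : ℤ) := by linarith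
    exact_mod_cast h2
  -- product telescoping : r(n+Δ)/r n = ∏_{j<Δ} x(n+j)
  have htel : ∀ n : ℕ, 1 ≤ n → ∀ d : ℕ,
      (r (n + d) : ℝ) / (r n : ℝ) = ∏ j ∈ Finset.range d, x (n + j) := by
    intro n hn d
    induction d with
    | zero => simp [div_self (hrpos n hn).ne']
    | succ d ih =>
      have h1 : (0 : ℝ) < (r (n + d) : ℝ) := hrpos _ (le_trans hn (Nat.le_add_right n d))
      rw [Finset.prod_range_succ, ← ih]
      show (r (n + d + 1) : ℝ) / (r n : ℝ) = _
      rw [mul_comm, div_mul_div_cancel₀]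
      exact h1.ne'
  have hprod : Tendsto (fun n => (r (n + Δ) : ℝ) / (r n : ℝ)) atTop (nhds (θ ^ Δ)) := by
    have h1 : Tendsto (fun n => ∏ j ∈ Finset.range Δ, x (n + j)) atTop
        (nhds (∏ _j ∈ Finset.range Δ, θ)) := by
      apply tendsto_finset_prod
      intro j _
      exact htends.comp (tendsto_add_atTop_nat j)
    rw [Finset.prod_const, Finset.card_range] at h1
    apply Tendsto.congr' _ h1
    filter_upwards [eventually_ge_atTop 1] with n hn
    exact (htel n hn Δ).symm
  have hθpos : (0 : ℝ) < θ ^ Δ := pow_pos (by linarith) Δ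
  have hinv : Tendsto (fun n => (r n : ℝ) / (r (n + Δ) : ℝ)) atTop (nhds ((θ ^ Δ)⁻¹)) := by
    have h1 := hprod.inv₀ hθpos.ne'
    apply Tendsto.congr' _ h1
    filter_upwards [eventually_ge_atTop 1] with n hn
    rw [inv_div]
  have hkey : 1 + (θ ^ Δ)⁻¹ ≤ θ := by
    have hle : ∀ᶠ n in atTop, 1 + (r n : ℝ) / (r (n + Δ) : ℝ) ≤ x (n + Δ) := by
      filter_upwards [eventually_ge_atTop 1] with n hn
      have hp : (0 : ℝ) < (r (n + Δ) : ℝ) := hrpos _ (le_trans hn (Nat.le_add_right n Δ))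
      show _ ≤ (r (n + Δ + 1) : ℝ) / (r (n + Δ) : ℝ)
      rw [le_div_iff₀ hp, add_mul, one_mul, div_mul_cancel₀ _ hp.ne']
      linarith [hS2 n]
    exact le_of_tendsto_of_tendsto ((tendsto_const_nhds.add hinv))
      (htends.comp (tendsto_add_atTop_nat Δ)) hle
  left
  exact ⟨θ, by nlinarith [inv_pos.2 hθpos], htends⟩
end

section
/- Let R ⊆ ℕ be sparse, enumerated by (r_n), and suppose r_{n+1}/r_n → θ ∈ ℝ where θ is algebraic over ℚ with minimal polynomial f(x) = Σ_{i=0}^{k} a_i x^i (a_i ∈ ℚ, cleared to integers). Then the operator f(σ) vanishes identically on R, i.e. Σ_{i=0}^{k} a_i r_{n+i} = 0 for all n ∈ ℕ. (Hence every sparse predicate is regular.) -/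
open Filter Polynomial

lemma int_of_den_dvd (q : ℚ) (m : ℕ) (h : q.den ∣ m) :
    ((q.num * ((m:ℤ) / (q.den:ℤ)) : ℤ) : ℚ) = q * m := by
  obtain ⟨c, hc⟩ := h
  subst hc
  have hd : (q.den : ℤ) ≠ 0 := by exact_mod_cast q.den_nz
  have hm : ((q.den * c : ℕ) : ℤ) = (q.den : ℤ) * (c : ℤ) := by push_cast; ring
  rw [hm, Int.mul_ediv_cancel_left _ hd]
  push_cast
  have : q * ((q.den:ℚ) * c) = (q * q.den) * c := by ring
  rw [this, Rat.mul_den_eq_num]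

/-- if `R` is sparse and `r_{n+1}/r_n → θ` with `θ` algebraic over `ℚ`
with minimal polynomial `f = Σ a_i x^i`, then `f(σ)` vanishes identically on `R`:
`Σ_i a_i r_{n+i} = 0` for every `n`. Hence every sparse predicate is regular. -/
theorem sparse_is_regular (r : ℕ → ℕ) (hmono : StrictMono r) (hsparse : IsSparse r)
    (θ : ℝ) (halg : IsAlgebraic ℚ θ)
    (htend : Tendsto (fun n => (r (n + 1) : ℝ) / (r n : ℝ)) atTop (nhds θ)) :
    ∀ n : ℕ,
      ∑ i ∈ Finset.range ((minpoly ℚ θ).natDegree + 1),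
        ((minpoly ℚ θ).coeff i : ℝ) * (r (n + i) : ℝ) = 0 := by
  set f := minpoly ℚ θ with hfdef
  set k := f.natDegree with hk
  set d : ℕ := ∏ i ∈ Finset.range (k+1), (f.coeff i).den with hd
  have hdpos : 0 < d := Finset.prod_pos (fun i _ => (f.coeff i).pos)
  set a : ℕ → ℤ := fun i => (f.coeff i).num * ((d:ℤ) / ((f.coeff i).den:ℤ)) with ha
  have hacast : ∀ i ∈ Finset.range (k+1), ((a i : ℚ)) = f.coeff i * d := fun i hi =>
    int_of_den_dvd _ _ (Finset.dvd_prod_of_mem _ hi)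
  have hacastR : ∀ i ∈ Finset.range (k+1), ((a i : ℝ)) = (f.coeff i : ℝ) * d := by
    intro i hi
    have := hacast i hi
    exact_mod_cast congrArg (fun q : ℚ => (q : ℝ)) this
  have hrpos : ∀ n : ℕ, 1 ≤ n → 0 < (r n : ℝ) := by
    intro n hn
    have h1 : r 0 < r n := hmono (lt_of_lt_of_le Nat.zero_lt_one hn)
    have : 0 < r n := lt_of_le_of_lt (Nat.zero_le _) h1
    exact_mod_cast this
  have hθ1 : 1 ≤ θ := by
    refine ge_of_tendsto htend ?_
    filter_upwards [eventually_ge_atTop 1] with n hn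
    have h1 : (r n : ℝ) ≤ r (n+1) := by exact_mod_cast (hmono (Nat.lt_succ_self n)).le
    exact (one_le_div (hrpos n hn)).mpr h1
  have hθ0 : (0:ℝ) < θ := lt_of_lt_of_le one_pos hθ1
  have hrat : ∀ i : ℕ, Tendsto (fun n => (r (n+i):ℝ)/(r n)) atTop (nhds (θ^i)) := by
    intro i
    induction i with
    | zero =>
      simp only [pow_zero, Nat.add_zero]
      refine Tendsto.congr' ?_ (tendsto_const_nhds : Tendsto (fun _ : ℕ => (1:ℝ)) atTop (nhds 1))
      filter_upwards [eventually_ge_atTop 1] with n hn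
      exact (div_self (ne_of_gt (hrpos n hn))).symm
    | succ i ih =>
      have h1 : Tendsto (fun n => (r (n+i+1):ℝ)/(r (n+i))) atTop (nhds θ) :=
        htend.comp (tendsto_add_atTop_nat i)
      have h2 := h1.mul ih
      refine Tendsto.congr' ?_ (by rw [mul_comm, ← pow_succ] at h2; exact h2)
      filter_upwards [eventually_ge_atTop 1] with n hn
      have hne : (r (n+i) : ℝ) ≠ 0 := ne_of_gt (hrpos _ (le_add_right hn))
      rw [div_mul_div_cancel₀ hne, ← add_assoc]
  have hAr : Tendsto (fun n => (opApp a k r n : ℝ)/(r n)) atTop (nhds 0) := by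
    have hsum : Tendsto (fun n => ∑ i ∈ Finset.range (k+1), (a i:ℝ) * ((r (n+i):ℝ)/(r n)))
        atTop (nhds (∑ i ∈ Finset.range (k+1), (a i:ℝ) * θ^i)) :=
      tendsto_finset_sum _ (fun i _ => ((hrat i).const_mul _))
    have hval : (∑ i ∈ Finset.range (k+1), (a i:ℝ) * θ^i) = 0 := by
      have haev : (Polynomial.aeval θ) f = 0 := minpoly.aeval ℚ θ
      rw [aeval_eq_sum_range] at haev
      calc ∑ i ∈ Finset.range (k+1), (a i:ℝ) * θ^i
          = ∑ i ∈ Finset.range (k+1), (d:ℝ) * (f.coeff i • θ^i) := by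
            refine Finset.sum_congr rfl fun i hi => ?_
            rw [hacastR i hi, Rat.smul_def]; ring
        _ = (d:ℝ) * ∑ i ∈ Finset.range (k+1), f.coeff i • θ^i := by
            rw [Finset.mul_sum]
        _ = 0 := by rw [haev, mul_zero]
    rw [← hval]
    refine Tendsto.congr' ?_ hsum
    filter_upwards [eventually_ge_atTop 1] with n hn
    rw [opApp]
    push_cast
    rw [Finset.sum_div]
    exact Finset.sum_congr rfl fun i _ => (mul_div_assoc _ _ _).symm
  have key : ∀ (b : ℕ → ℤ), Tendsto (fun n => (opApp b k r n : ℝ)/(r n)) atTop (nhds 0) →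
      ¬ (∃ Δ : ℕ, ∀ n, (r n : ℤ) < opApp b k r (n+Δ)) := by
    rintro b hb ⟨Δ, hΔ⟩
    have hshift : Tendsto (fun n => (opApp b k r (n+Δ) : ℝ)/(r (n+Δ))) atTop (nhds 0) :=
      hb.comp (tendsto_add_atTop_nat Δ)
    have hθΔ : (0:ℝ) < θ^Δ := pow_pos hθ0 Δ
    have hinv : Tendsto (fun n => (r n : ℝ)/(r (n+Δ))) atTop (nhds ((θ^Δ)⁻¹)) := by
      refine ((hrat Δ).inv₀ (ne_of_gt hθΔ)).congr fun n => ?_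
      rw [inv_div]
    have hle : (θ^Δ)⁻¹ ≤ 0 := by
      refine le_of_tendsto_of_tendsto hinv hshift ?_
      filter_upwards [eventually_ge_atTop 1] with n hn
      have h1 : (r n : ℝ) < (opApp b k r (n+Δ) : ℝ) := by exact_mod_cast hΔ n
      have h2 : 0 < (r (n+Δ) : ℝ) := hrpos _ (le_add_right hn)
      exact ((div_lt_div_iff_of_pos_right h2).mpr h1).le
    have : 0 < (θ^Δ)⁻¹ := inv_pos.mpr hθΔ
    linarith
  have hzero : ∀ n, opApp a k r n = 0 := by
    rcases (hsparse a k).1 with h | h | h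
    · exact h
    · exact absurd ((hsparse a k).2 h) (key a hAr)
    · set b : ℕ → ℤ := fun i => -a i with hb
      have hbop : ∀ n, opApp b k r n = - opApp a k r n := by
        intro n; simp [opApp, hb, neg_mul, Finset.sum_neg_distrib]
      have hpos : ∀ᶠ n in atTop, 0 < opApp b k r n := by
        filter_upwards [h] with n hn; rw [hbop]; linarith
      have hbl : Tendsto (fun n => (opApp b k r n : ℝ)/(r n)) atTop (nhds 0) := by
        have h' := hAr.neg
        rw [neg_zero] at h'
        refine h'.congr fun n => ?_
        rw [hbop]; push_cast; rw [neg_div]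
      exact absurd ((hsparse b k).2 hpos) (key b hbl)
  intro n
  have h0 : (opApp a k r n : ℝ) = 0 := by exact_mod_cast hzero n
  rw [opApp] at h0
  push_cast at h0
  have hsum : (∑ i ∈ Finset.range (k+1), (f.coeff i : ℝ) * (r (n+i):ℝ)) * (d:ℝ) = 0 := by
    rw [Finset.sum_mul, ← h0]
    refine Finset.sum_congr rfl fun i hi => ?_
    rw [hacastR i hi]; ring
  have hdne : (d:ℝ) ≠ 0 := by positivity
  exact (mul_eq_zero.mp hsum).resolve_right hdne
end

section
/- Let R ⊆ ℕ be sparse with enumeration (r_n), and suppose r_{n+1}/r_n → θ ∈ ℝ_{>1}. If g is a polynomial with integer coefficients such that the operator g(σ) is eventually positive on R, then g(θ) ≥ 0; more precisely, g(σ)(r_n)/r_n → g(θ) as n → ∞, and if g(θ) = 0 then for every Δ ∈ ℕ, g(σ)(r_{n+Δ})/r_n → 0, contradicting any bound g(σ)(r_{n+Δ}) > r_n for all n. -/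
open Filter

/-- The action of the operator `g(σ)` on the enumeration `r`:
`polyOp g r n = Σ_i g_i · r(n+i)`. -/
def polyOp (g : Polynomial ℤ) (r : ℕ → ℕ) (n : ℕ) : ℤ :=
  ∑ i ∈ Finset.range (g.natDegree + 1), g.coeff i * (r (n + i) : ℤ)

/-- if `r_{n+1}/r_n → θ > 1` and the operator `g(σ)` is eventually
positive on `R`, then `g(θ) ≥ 0`; more precisely `g(σ)(r_n)/r_n → g(θ)`, and if
`g(θ) = 0` then for every `Δ`, `g(σ)(r_{n+Δ})/r_n → 0`, contradicting any bound
`g(σ)(r_{n+Δ}) > r_n` for all `n`. -/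
theorem operator_limit_poly (r : ℕ → ℕ) (hmono : StrictMono r)
    (θ : ℝ) (hθ : 1 < θ)
    (htend : Tendsto (fun n => (r (n + 1) : ℝ) / (r n : ℝ)) atTop (nhds θ))
    (g : Polynomial ℤ) (hpos : ∀ᶠ n in atTop, 0 < polyOp g r n) :
    0 ≤ Polynomial.aeval θ g ∧
    Tendsto (fun n => (polyOp g r n : ℝ) / (r n : ℝ)) atTop (nhds (Polynomial.aeval θ g)) ∧
    (Polynomial.aeval θ g = 0 → ∀ Δ : ℕ,
      Tendsto (fun n => (polyOp g r (n + Δ) : ℝ) / (r n : ℝ)) atTop (nhds 0) ∧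
      ¬ ∀ n : ℕ, (r n : ℤ) < polyOp g r (n + Δ)) := by
  have hrpos : ∀ n : ℕ, 1 ≤ n → 0 < r n := fun n hn =>
    lt_of_lt_of_le hn (hmono.le_apply)
  have hrpos' : ∀ᶠ n in atTop, (0 : ℝ) < (r n : ℝ) := by
    filter_upwards [eventually_ge_atTop 1] with n hn
    exact_mod_cast hrpos n hn
  -- ratios tend to powers of θ
  have hrat : ∀ i : ℕ, Tendsto (fun n => (r (n + i) : ℝ) / (r n : ℝ)) atTop (nhds (θ ^ i)) := by
    intro i
    induction i with
    | zero =>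
      simp only [Nat.add_zero, pow_zero]
      apply Tendsto.congr' _ tendsto_const_nhds
      filter_upwards [hrpos'] with n hn
      rw [div_self hn.ne']
    | succ i ih =>
      have h1 : Tendsto (fun n => (r (n + i + 1) : ℝ) / (r (n + i) : ℝ)) atTop (nhds θ) :=
        htend.comp (tendsto_add_atTop_nat i)
      have := h1.mul ih
      rw [← pow_succ'] at this
      apply Tendsto.congr' _ this
      filter_upwards [hrpos', (tendsto_add_atTop_nat i).eventually hrpos'] with n hn hni
      field_simp
      ring
  -- main limit
  have key : Tendsto (fun n => (polyOp g r n : ℝ) / (r n : ℝ)) atTop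
      (nhds (Polynomial.aeval θ g)) := by
    have haeval : (Polynomial.aeval θ g : ℝ) =
        ∑ i ∈ Finset.range (g.natDegree + 1), (g.coeff i : ℝ) * θ ^ i := by
      rw [Polynomial.aeval_eq_sum_range]
      simp [zsmul_eq_mul]
    rw [haeval]
    have := tendsto_finset_sum (Finset.range (g.natDegree + 1))
      (fun i _ => (hrat i).const_mul (g.coeff i : ℝ))
    apply Tendsto.congr _ this
    intro n
    simp only [polyOp]
    push_cast
    rw [Finset.sum_div]
    exact Finset.sum_congr rfl fun i _ => (mul_div_assoc _ _ _).symm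
  refine ⟨?_, key, ?_⟩
  · apply le_of_tendsto_of_tendsto tendsto_const_nhds key
    filter_upwards [hpos, hrpos'] with n h1 h2
    have : (0:ℝ) ≤ (polyOp g r n : ℝ) := by exact_mod_cast h1.le
    exact div_nonneg this h2.le
  · intro h0 Δ
    have hcomp : Tendsto (fun n : ℕ => n + Δ) atTop atTop :=
      tendsto_add_atTop_nat Δ
    have h1 : Tendsto (fun n => (polyOp g r (n + Δ) : ℝ) / (r (n + Δ) : ℝ)) atTop (nhds 0) := by
      have := key.comp hcomp
      rwa [h0] at this
    have hzero : Tendsto (fun n => (polyOp g r (n + Δ) : ℝ) / (r n : ℝ)) atTop (nhds 0) := by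
      have := h1.mul (hrat Δ)
      rw [zero_mul] at this
      apply Tendsto.congr' _ this
      filter_upwards [hrpos', hcomp.eventually hrpos'] with n hn hnΔ
      field_simp
    refine ⟨hzero, fun hall => ?_⟩
    have hge : ∀ᶠ n in atTop, (1 : ℝ) ≤ (polyOp g r (n + Δ) : ℝ) / (r n : ℝ) := by
      filter_upwards [hrpos', eventually_ge_atTop 1] with n hn hn1
      have h2 : (r n : ℝ) < (polyOp g r (n + Δ) : ℝ) := by exact_mod_cast hall n
      rw [le_div_iff₀ hn, one_mul]
      exact h2.le
    have : (1 : ℝ) ≤ 0 := le_of_tendsto_of_tendsto tendsto_const_nhds hzero hge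
    linarith
end

section
/- Let R ⊆ ℕ be sparse with enumeration (r_n), and let A be an operator that is eventually positive on R. Then for every k ∈ ℕ there exists Δ ∈ ℕ such that A(n+Δ) > k·r(n) for all n ∈ ℕ. -/
open Filter

/-
Induct on `c`. If `c · r(n) < A(n + Δ)` for all `n`, then `B(n) = A(n + Δ) - c · r(n)`
is again an operator, and it is positive, so sparsity gives `Δ'` with `r(n) < B(n + Δ')`; since `r`
is increasing, `c · r(n) ≤ c · r(n + Δ')`, whence `(c + 1) · r(n) < A(n + Δ + Δ')`.
-/

def shiftCoeffs (a : ℕ → ℤ) (Δ : ℕ) (j : ℕ) : ℤ :=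
  if Δ ≤ j then a (j - Δ) else 0

section opApp

variable (r : ℕ → ℕ) (k n : ℕ)

theorem opApp_add (a b : ℕ → ℤ) : opApp (a + b) k r n = opApp a k r n + opApp b k r n := by
  simp only [opApp, Pi.add_apply, add_mul, Finset.sum_add_distrib]

theorem opApp_single_zero (c : ℤ) : opApp (Pi.single 0 c) k r n = c * r n := by
  simp [opApp, Pi.single_apply]

theorem opApp_shiftCoeffs (a : ℕ → ℤ) (Δ : ℕ) :
    opApp (shiftCoeffs a Δ) (k + Δ) r n = opApp a k r (n + Δ) := by
  rw [opApp, opApp, show k + Δ + 1 = Δ + (k + 1) by omega, Finset.sum_range_add]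
  have hlow : ∀ j ∈ Finset.range Δ, shiftCoeffs a Δ j * (r (n + j) : ℤ) = 0 := fun j hj => by
    simp [shiftCoeffs, (Finset.mem_range.mp hj).not_ge]
  rw [Finset.sum_eq_zero hlow, zero_add]
  simp [shiftCoeffs, add_assoc, add_comm Δ]

theorem opApp_single_zero_add_shiftCoeffs (a : ℕ → ℤ) (Δ : ℕ) (c : ℤ) :
    opApp (Pi.single 0 (-c) + shiftCoeffs a Δ) (k + Δ) r n = opApp a k r (n + Δ) - c * r n := by
  rw [opApp_add, opApp_single_zero, opApp_shiftCoeffs]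
  ring

end opApp

theorem IsSparse.exists_shift_gt_succ_mul {r : ℕ → ℕ} (hmono : StrictMono r)
    (hsparse : IsSparse r) {a : ℕ → ℤ} {k Δ c : ℕ}
    (h : ∀ n, (c : ℤ) * r n < opApp a k r (n + Δ)) :
    ∃ Δ', ∀ n, ((c + 1 : ℕ) : ℤ) * r n < opApp a k r (n + Δ') := by
  set b := Pi.single 0 (-(c : ℤ)) + shiftCoeffs a Δ
  have hb : ∀ n, opApp b (k + Δ) r n = opApp a k r (n + Δ) - c * r n :=
    fun n => opApp_single_zero_add_shiftCoeffs r k n a Δ c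
  have hb_pos : ∀ᶠ n in atTop, 0 < opApp b (k + Δ) r n :=
    Eventually.of_forall fun n => by rw [hb]; linarith [h n]
  obtain ⟨Δ', hΔ'⟩ := (hsparse b (k + Δ)).2 hb_pos
  refine ⟨Δ + Δ', fun n => ?_⟩
  have hgt := hΔ' n
  rw [hb, add_right_comm, add_assoc] at hgt
  have hle : (c : ℤ) * r n ≤ c * r (n + Δ') :=
    mul_le_mul_of_nonneg_left (by exact_mod_cast hmono.monotone (Nat.le_add_right n Δ'))
      (Int.natCast_nonneg c)
  push_cast
  linarith

/-- an eventually positive operator on a sparse set eventually beats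
every natural multiple of the enumeration, after a suitable shift. -/
theorem shift_beats_multiple (r : ℕ → ℕ) (hmono : StrictMono r) (hsparse : IsSparse r)
    (a : ℕ → ℤ) (k : ℕ) (hpos : ∀ᶠ n in atTop, 0 < opApp a k r n) :
    ∀ c : ℕ, ∃ Δ : ℕ, ∀ n : ℕ, (c : ℤ) * (r n : ℤ) < opApp a k r (n + Δ) := by
  intro c
  induction c with
  | zero =>
    obtain ⟨Δ, hΔ⟩ := (hsparse a k).2 hpos
    exact ⟨Δ, fun n => by simpa using (Int.natCast_nonneg (r n)).trans_lt (hΔ n)⟩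
  | succ c ih =>
    obtain ⟨Δ, hΔ⟩ := ih
    exact hsparse.exists_shift_gt_succ_mul hmono hΔ
end
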